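/- arXiv:2210.11393 — 6 statements merged into one kernel-verified Lean document; each statement's English description precedes it below -/
import Mathlib

section
/- Fix integers D ≥ 1 and r ≥ 1, a differentiable state family ρ at θ₀ on ℂ^D, and a POVM M on ℂ^D with r outcomes, and assume F := F(ρ₀, ρ₀', M) > 0. For x ∈ ℝ^r set X = Σᵢ xᵢMᵢ and X₂ = Σᵢ xᵢ²Mᵢ. Then: (a) every x ∈ ℝ^r with Re Tr(ρ₀X) = 0 and Re Tr(ρ₀'X) = 1 satisfies Re Tr(ρ₀X₂) ≥ 1/F; and (b) the vector x* defined by xᵢ* = (Re Tr(ρ₀'Mᵢ)/Tr(ρ₀Mᵢ))/F for those i with Tr(ρ₀Mᵢ) ≠ 0 and xᵢ* = 0 otherwise satisfies Re Tr(ρ₀X*) = 0, Re Tr(ρ₀'X*) = 1 and Re Tr(ρ₀X₂*) = 1/F. Consequently, the minimum of Re Tr(ρ₀X₂) over all x satisfying the two constraints equals F(ρ₀, ρ₀', M)⁻¹. -/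
open scoped Matrix Kronecker ComplexOrder
open Classical

noncomputable section

/-- A density matrix: positive semidefinite with unit trace. -/
def IsDensityMatrix {n : Type*} [Fintype n] (ρ : Matrix n n ℂ) : Prop :=
  ρ.PosSemidef ∧ ρ.trace = 1

/-- A POVM with `r` outcomes. -/
def IsPOVM {n : Type*} [Fintype n] [DecidableEq n] {r : ℕ}
    (M : Fin r → Matrix n n ℂ) : Prop :=
  (∀ i, (M i).PosSemidef) ∧ ∑ i, M i = 1

/-- The Fisher information of the measurement-outcome distribution. -/
def FisherInfo {n : Type*} [Fintype n] {r : ℕ}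
    (ρ ρ' : Matrix n n ℂ) (M : Fin r → Matrix n n ℂ) : ℝ :=
  ∑ i, if (ρ * M i).trace = 0 then 0
    else ((ρ' * M i).trace.re) ^ 2 / ((ρ * M i).trace.re)

/-- A quantum channel (CPTP map) given by finitely many Kraus operators. -/
def IsQuantumChannel {m n : Type*} [Fintype m] [Fintype n] [DecidableEq m]
    (E : Matrix m m ℂ → Matrix n n ℂ) : Prop :=
  ∃ (κ : ℕ) (K : Fin κ → Matrix n m ℂ),
    (∑ j, (K j)ᴴ * K j = 1) ∧ ∀ σ, E σ = ∑ j, K j * σ * (K j)ᴴ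

/-- Quantum preprocessing-optimized Fisher information. -/
def QPFI {m n : Type*} [Fintype m] [Fintype n] [DecidableEq m] {r : ℕ}
    (ρ ρ' : Matrix m m ℂ) (M : Fin r → Matrix n n ℂ) : ℝ :=
  sSup {x : ℝ | ∃ E : Matrix m m ℂ → Matrix n n ℂ,
    IsQuantumChannel E ∧ x = FisherInfo (E ρ) (E ρ') M}

/-- Quantum unitary-preprocessing-optimized Fisher information. -/
def QUPFI {n : Type*} [Fintype n] [DecidableEq n] {r : ℕ}
    (ρ ρ' : Matrix n n ℂ) (M : Fin r → Matrix n n ℂ) : ℝ :=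
  sSup {x : ℝ | ∃ U : Matrix n n ℂ, U ∈ Matrix.unitaryGroup n ℂ ∧
    x = FisherInfo (U * ρ * Uᴴ) (U * ρ' * Uᴴ) M}

/-- Complex inner product, conjugate-linear in the first argument. -/
def cInner {n : Type*} [Fintype n] (φ ψ : n → ℂ) : ℂ := ∑ k, star (φ k) * ψ k

/-- The functional whose supremum over orthonormal pairs is the normalized QPFI. -/
def gammaSummand {n : Type*} [Fintype n] {r : ℕ}
    (M : Fin r → Matrix n n ℂ) (φ φp : n → ℂ) : ℝ :=
  ∑ i, if cInner φ (M i *ᵥ φ) = 0 then 0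
    else ((cInner φ (M i *ᵥ φp)).re) ^ 2 / ((cInner φ (M i *ᵥ φ)).re)

/-- The normalized QPFI of a POVM. -/
def gammaPOVM {n : Type*} [Fintype n] {r : ℕ} (M : Fin r → Matrix n n ℂ) : ℝ :=
  sSup {x : ℝ | ∃ φ φp : n → ℂ,
    cInner φ φ = 1 ∧ cInner φp φp = 1 ∧ cInner φ φp = 0 ∧ x = gammaSummand M φ φp}

/-- Quantum Fisher information: the Fisher information optimized over all POVMs. -/
def QFI {m : Type*} [Fintype m] [DecidableEq m] (ρ ρ' : Matrix m m ℂ) : ℝ :=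
  sSup {x : ℝ | ∃ (κ : ℕ) (T : Fin κ → Matrix m m ℂ), IsPOVM T ∧ x = FisherInfo ρ ρ' T}

/-- Classical Fisher information of a finite probability distribution. -/
def classFisher {r : ℕ} (p p' : Fin r → ℝ) : ℝ :=
  ∑ i, if p i = 0 then 0 else (p' i) ^ 2 / p i


lemma trace_psd_nonneg {n : Type*} [Fintype n] [DecidableEq n] {A : Matrix n n ℂ}
    (hA : A.PosSemidef) : 0 ≤ A.trace := by
  rw [Matrix.trace]
  refine Finset.sum_nonneg fun i _ => ?_
  exact hA.diag_nonneg

lemma trace_mul_psd_nonneg {n : Type*} [Fintype n] [DecidableEq n] {A B : Matrix n n ℂ}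
    (hA : A.PosSemidef) (hB : B.PosSemidef) : 0 ≤ (A * B).trace := by
  obtain ⟨C, rfl⟩ : ∃ C : Matrix n n ℂ, B = Cᴴ * C := by
    open scoped MatrixOrder in exact (CStarAlgebra.nonneg_iff_eq_star_mul_self).mp hB.nonneg
  have h1 : (A * (Cᴴ * C)).trace = (C * A * Cᴴ).trace := by
    rw [← Matrix.mul_assoc, Matrix.trace_mul_cycle]
  rw [h1]
  exact trace_psd_nonneg (hA.mul_mul_conjTranspose_same C)

/-- the error-observable formulation of the Cramér–Rao bound for a fixed
measurement: the minimum of `Re Tr(ρ₀ X₂)` over locally unbiased error vectors equals the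
inverse Fisher information, attained at the explicit optimal error vector. -/
theorem stmt0 {D r : ℕ} (hD : 1 ≤ D) (hr : 1 ≤ r)
    (ρ : ℝ → Matrix (Fin D) (Fin D) ℂ) (ρ' : Matrix (Fin D) (Fin D) ℂ) (θ₀ : ℝ)
    (hdens : ∀ θ, IsDensityMatrix (ρ θ))
    (hder : ∀ i j, HasDerivAt (fun θ => ρ θ i j) (ρ' i j) θ₀)
    (M : Fin r → Matrix (Fin D) (Fin D) ℂ) (hM : IsPOVM M)
    (hF : 0 < FisherInfo (ρ θ₀) ρ' M) :
    (∀ x : Fin r → ℝ,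
      (ρ θ₀ * ∑ i, (x i : ℂ) • M i).trace.re = 0 →
      (ρ' * ∑ i, (x i : ℂ) • M i).trace.re = 1 →
      1 / FisherInfo (ρ θ₀) ρ' M ≤ (ρ θ₀ * ∑ i, ((x i : ℂ)) ^ 2 • M i).trace.re)
    ∧ (∀ xstar : Fin r → ℝ,
      (∀ i, xstar i = if (ρ θ₀ * M i).trace = 0 then 0
        else ((ρ' * M i).trace.re / (ρ θ₀ * M i).trace.re) / FisherInfo (ρ θ₀) ρ' M) →
      (ρ θ₀ * ∑ i, (xstar i : ℂ) • M i).trace.re = 0 ∧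
      (ρ' * ∑ i, (xstar i : ℂ) • M i).trace.re = 1 ∧
      (ρ θ₀ * ∑ i, ((xstar i : ℂ)) ^ 2 • M i).trace.re = 1 / FisherInfo (ρ θ₀) ρ' M)
    ∧ IsLeast {y : ℝ | ∃ x : Fin r → ℝ,
        (ρ θ₀ * ∑ i, (x i : ℂ) • M i).trace.re = 0 ∧
        (ρ' * ∑ i, (x i : ℂ) • M i).trace.re = 1 ∧
        y = (ρ θ₀ * ∑ i, ((x i : ℂ)) ^ 2 • M i).trace.re}
      (FisherInfo (ρ θ₀) ρ' M)⁻¹ := by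
  set F := FisherInfo (ρ θ₀) ρ' M with hFdef
  set p : Fin r → ℝ := fun i => ((ρ θ₀) * M i).trace.re with hpdef
  set q : Fin r → ℝ := fun i => (ρ' * M i).trace.re with hqdef
  -- traces are real and nonnegative
  have htr : ∀ θ i, 0 ≤ ((ρ θ) * M i).trace := fun θ i =>
    trace_mul_psd_nonneg (hdens θ).1 (hM.1 i)
  have hp0 : ∀ i, 0 ≤ p i := fun i => (Complex.nonneg_iff.mp (htr θ₀ i)).1
  have hreal : ∀ i, ((ρ θ₀) * M i).trace = ((p i : ℝ) : ℂ) := by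
    intro i
    have h := (Complex.nonneg_iff.mp (htr θ₀ i)).2
    exact Complex.ext rfl h.symm
  have hzero_iff : ∀ i, (((ρ θ₀) * M i).trace = 0 ↔ p i = 0) := by
    intro i
    rw [hreal i]
    exact_mod_cast Iff.rfl
  -- derivative of the (real) outcome probability
  have hderiv_tr : ∀ i, HasDerivAt (fun θ => ((ρ θ * M i).trace.re)) (q i) θ₀ := by
    intro i
    have h1 : HasDerivAt (fun θ => (ρ θ * M i).trace) ((ρ' * M i).trace) θ₀ := by
      simp only [Matrix.trace, Matrix.diag_apply, Matrix.mul_apply]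
      exact HasDerivAt.fun_sum fun j _ => HasDerivAt.fun_sum fun k _ => (hder j k).mul_const _
    have := (Complex.reCLM.hasFDerivAt).comp_hasDerivAt θ₀ h1
    simpa [Function.comp_def] using this
  have hq0 : ∀ i, p i = 0 → q i = 0 := by
    intro i hpi
    have hmin : IsLocalMin (fun θ => ((ρ θ * M i).trace.re)) θ₀ :=
      Filter.Eventually.of_forall fun θ => by
        show (ρ θ₀ * M i).trace.re ≤ (ρ θ * M i).trace.re
        rw [show (ρ θ₀ * M i).trace.re = p i from rfl, hpi]
        exact (Complex.nonneg_iff.mp (htr θ i)).1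
    exact hmin.hasDerivAt_eq_zero (hderiv_tr i)
  -- sum of q is zero
  have hqsum : ∑ i, q i = 0 := by
    have htrρ' : ρ'.trace = 0 := by
      have h1 : HasDerivAt (fun θ => (ρ θ).trace) ρ'.trace θ₀ := by
        simp only [Matrix.trace, Matrix.diag_apply]
        exact HasDerivAt.fun_sum fun j _ => hder j j
      have h2 : HasDerivAt (fun θ => (ρ θ).trace) 0 θ₀ := by
        have he : (fun θ => (ρ θ).trace) = fun _ => (1 : ℂ) := funext fun θ => (hdens θ).2
        rw [he]; exact hasDerivAt_const _ _
      exact h1.unique h2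
    have : ∑ i, (ρ' * M i).trace = 0 := by
      rw [← Matrix.trace_sum, ← Finset.mul_sum, hM.2, Matrix.mul_one, htrρ']
    calc ∑ i, q i = (∑ i, (ρ' * M i).trace).re := by
          rw [Complex.re_sum]
      _ = 0 := by rw [this]; simp
  -- linearity
  have hlin : ∀ (σ : Matrix (Fin D) (Fin D) ℂ) (c : Fin r → ℝ),
      (σ * ∑ i, (c i : ℂ) • M i).trace.re = ∑ i, c i * (σ * M i).trace.re := by
    intro σ c
    rw [Finset.mul_sum]
    simp only [Matrix.mul_smul]
    rw [Matrix.trace_sum, Complex.re_sum]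
    refine Finset.sum_congr rfl fun i _ => ?_
    simp [Matrix.trace_smul, Complex.mul_re]
  have hlin2 : ∀ (σ : Matrix (Fin D) (Fin D) ℂ) (x : Fin r → ℝ),
      (σ * ∑ i, ((x i : ℂ)) ^ 2 • M i).trace.re = ∑ i, x i ^ 2 * (σ * M i).trace.re := by
    intro σ x
    have := hlin σ (fun i => x i ^ 2)
    simp only [Complex.ofReal_pow] at this
    exact this
  -- Fisher info rewritten with real conditions
  have hFeq : F = ∑ i, (if p i = 0 then 0 else q i ^ 2 / p i) := by
    rw [hFdef]
    unfold FisherInfo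
    exact Finset.sum_congr rfl fun i _ => if_congr (hzero_iff i) rfl rfl
  have hF' : 0 < F := hF
  have hFne : F ≠ 0 := ne_of_gt hF'
  -- the key Cauchy–Schwarz inequality
  have key : ∀ x : Fin r → ℝ, ∑ i, x i * q i = 1 → 1 / F ≤ ∑ i, x i ^ 2 * p i := by
    intro x hx
    set f : Fin r → ℝ := fun i => if p i = 0 then 0 else q i / Real.sqrt (p i) with hfdef
    set g : Fin r → ℝ := fun i => x i * Real.sqrt (p i) with hgdef
    have hfg : ∑ i, f i * g i = 1 := by
      rw [← hx]
      refine Finset.sum_congr rfl fun i _ => ?_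
      by_cases h : p i = 0
      · simp [hfdef, hgdef, h, hq0 i h]
      · have hs : Real.sqrt (p i) ≠ 0 :=
          Real.sqrt_ne_zero'.mpr (lt_of_le_of_ne (hp0 i) (Ne.symm h))
        simp only [hfdef, hgdef, if_neg h]
        field_simp
    have hf2 : ∑ i, f i ^ 2 = F := by
      rw [hFeq]
      refine Finset.sum_congr rfl fun i _ => ?_
      by_cases h : p i = 0
      · simp [hfdef, h]
      · simp only [hfdef, if_neg h, div_pow, Real.sq_sqrt (hp0 i)]
    have hg2 : ∑ i, g i ^ 2 = ∑ i, x i ^ 2 * p i := by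
      refine Finset.sum_congr rfl fun i _ => ?_
      rw [hgdef]
      rw [mul_pow, Real.sq_sqrt (hp0 i)]
    have hcs := Finset.sum_mul_sq_le_sq_mul_sq Finset.univ f g
    rw [hfg, hf2, hg2, one_pow] at hcs
    rw [div_le_iff₀ hF']
    linarith [hcs]
  have parta : ∀ x : Fin r → ℝ,
      (ρ' * ∑ i, (x i : ℂ) • M i).trace.re = 1 →
      1 / F ≤ (ρ θ₀ * ∑ i, ((x i : ℂ)) ^ 2 • M i).trace.re := by
    intro x hx2
    rw [hlin ρ' x] at hx2
    rw [hlin2 (ρ θ₀) x]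
    exact key x hx2
  have partb : ∀ xstar : Fin r → ℝ,
      (∀ i, xstar i = if (ρ θ₀ * M i).trace = 0 then 0
        else ((ρ' * M i).trace.re / (ρ θ₀ * M i).trace.re) / F) →
      (ρ θ₀ * ∑ i, (xstar i : ℂ) • M i).trace.re = 0 ∧
      (ρ' * ∑ i, (xstar i : ℂ) • M i).trace.re = 1 ∧
      (ρ θ₀ * ∑ i, ((xstar i : ℂ)) ^ 2 • M i).trace.re = 1 / F := by
    intro xs hxs
    have hxs' : ∀ i, xs i = if p i = 0 then 0 else (q i / p i) / F := by
      intro i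
      rw [hxs i, if_congr (hzero_iff i) rfl rfl]
    have h1 : ∑ i, xs i * p i = 0 := by
      have heq : ∀ i, xs i * p i = q i * F⁻¹ := by
        intro i
        rw [hxs' i]
        by_cases h : p i = 0
        · simp [h, hq0 i h]
        · rw [if_neg h]
          field_simp
      rw [Finset.sum_congr rfl fun i _ => heq i, ← Finset.sum_mul, hqsum, zero_mul]
    have h2 : ∑ i, xs i * q i = 1 := by
      have heq : ∀ i, xs i * q i = (if p i = 0 then 0 else q i ^ 2 / p i) * F⁻¹ := by
        intro i
        rw [hxs' i]
        by_cases h : p i = 0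
        · simp [h]
        · rw [if_neg h, if_neg h]
          field_simp
      rw [Finset.sum_congr rfl fun i _ => heq i, ← Finset.sum_mul, ← hFeq,
        mul_inv_cancel₀ hFne]
    have h3 : ∑ i, xs i ^ 2 * p i = 1 / F := by
      have heq : ∀ i, xs i ^ 2 * p i = (if p i = 0 then 0 else q i ^ 2 / p i) * (F⁻¹ * F⁻¹) := by
        intro i
        rw [hxs' i]
        by_cases h : p i = 0
        · simp [h]
        · rw [if_neg h, if_neg h]
          field_simp
      rw [Finset.sum_congr rfl fun i _ => heq i, ← Finset.sum_mul, ← hFeq]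
      field_simp
    refine ⟨?_, ?_, ?_⟩
    · rw [hlin (ρ θ₀) xs]; exact h1
    · rw [hlin ρ' xs]; exact h2
    · rw [hlin2 (ρ θ₀) xs]; exact h3
  refine ⟨fun x _ hx2 => parta x hx2, partb, ?_, ?_⟩
  · obtain ⟨hb1, hb2, hb3⟩ := partb (fun i => if (ρ θ₀ * M i).trace = 0 then 0
      else ((ρ' * M i).trace.re / (ρ θ₀ * M i).trace.re) / F) (fun i => rfl)
    exact ⟨_, hb1, hb2, by rw [hb3, one_div]⟩
  · rintro y ⟨x, hx1, hx2, rfl⟩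
    rw [inv_eq_one_div]
    exact parta x hx2
end
end

section
/- Fix integers D, d, r ≥ 1 and positive integers a₁, a₂ with D·a₁ = d·a₂ and a₁ ≥ d². Let ρ be a differentiable state family at θ₀ on ℂ^D and M a POVM on ℂ^d with r outcomes. Identifying ℂ^D ⊗ ℂ^{a₁} with ℂ^d ⊗ ℂ^{a₂} (both of dimension D·a₁), one has F^P(ρ₀, ρ₀', M) = sup over unitary (D·a₁)×(D·a₁) complex matrices U of F(U(ρ₀ ⊗ E₀)U*, U(ρ₀' ⊗ E₀)U*, {Mᵢ ⊗ 1_{a₂}}), where E₀ is the a₁×a₁ projection onto the first standard basis vector of ℂ^{a₁}, 1_{a₂} is the a₂×a₂ identity, and ⊗ is the Kronecker product. -/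
open scoped Matrix Kronecker ComplexOrder
open Classical

noncomputable section

namespace Stmt1Aux

open Matrix


variable {D d a₁ a₂ n : ℕ}

/-- The embedding `x ↦ x ⊗ e₀` as a matrix. -/
def embMat (ha₁ : 0 < a₁) (D : ℕ) : Matrix (Fin (D * a₁)) (Fin D) ℂ :=
  fun p j => if p = finProdFinEquiv (j, (⟨0, ha₁⟩ : Fin a₁)) then 1 else 0

lemma embMat_isometry (ha₁ : 0 < a₁) : (embMat ha₁ D)ᴴ * embMat ha₁ D = 1 := by
  ext j j'
  simp only [Matrix.mul_apply, Matrix.conjTranspose_apply, embMat,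
    apply_ite (star : ℂ → ℂ), star_one, star_zero, ite_mul, one_mul, zero_mul]
  simp [Finset.sum_ite_eq, Matrix.one_apply, Equiv.apply_eq_iff_eq, Prod.ext_iff, eq_comm]

lemma reindex_kron_E0 (ha₁ : 0 < a₁) (σ : Matrix (Fin D) (Fin D) ℂ) :
    Matrix.reindex finProdFinEquiv finProdFinEquiv
      (σ ⊗ₖ Matrix.single (⟨0, ha₁⟩ : Fin a₁) (⟨0, ha₁⟩ : Fin a₁) (1 : ℂ))
    = embMat ha₁ D * σ * (embMat ha₁ D)ᴴ := by
  ext p q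
  obtain ⟨⟨j, a⟩, rfl⟩ := finProdFinEquiv.surjective p
  obtain ⟨⟨j', a'⟩, rfl⟩ := finProdFinEquiv.surjective q
  simp only [Matrix.reindex_apply, Matrix.submatrix_apply, Equiv.symm_apply_apply,
    Matrix.kroneckerMap_apply, Matrix.mul_apply, Matrix.conjTranspose_apply, embMat,
    apply_ite (star : ℂ → ℂ), star_one, star_zero, Equiv.apply_eq_iff_eq, Prod.mk.injEq]
  by_cases hA : a = (⟨0, ha₁⟩ : Fin a₁) <;> by_cases hA' : a' = (⟨0, ha₁⟩ : Fin a₁) <;>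
    simp [hA, hA', ite_and, Matrix.single, eq_comm, Finset.sum_ite_eq,
      mul_comm]



namespace B

variable {d a₂ n : ℕ} (e2 : Fin d × Fin a₂ ≃ Fin n)

/-- The "bra" on the second tensor factor as a matrix. -/
def braMat (k : Fin a₂) : Matrix (Fin d) (Fin n) ℂ :=
  fun i q => if q = e2 (i, k) then 1 else 0

lemma braMat_mul_conj (k k' : Fin a₂) :
    braMat e2 k * (braMat e2 k')ᴴ = if k = k' then 1 else 0 := by
  ext i i'
  simp only [Matrix.mul_apply, Matrix.conjTranspose_apply, braMat,
    apply_ite (star : ℂ → ℂ), star_one, star_zero, ite_mul, one_mul, zero_mul]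
  by_cases hkk : k = k' <;> by_cases hii : i = i' <;>
    simp [hkk, hii, Finset.sum_ite_eq, Matrix.one_apply, Equiv.apply_eq_iff_eq,
      Prod.ext_iff, eq_comm]

lemma sum_conj_braMat : ∑ k, (braMat e2 k)ᴴ * braMat e2 k = 1 := by
  ext q q'
  simp only [Matrix.sum_apply, Matrix.mul_apply, Matrix.conjTranspose_apply, braMat,
    apply_ite (star : ℂ → ℂ), star_one, star_zero, ite_mul, one_mul, zero_mul]
  rw [Finset.sum_comm]
  calc (∑ y : Fin d, ∑ x : Fin a₂, if q = e2 (y, x) then if q' = e2 (y, x) then (1:ℂ) else 0 else 0)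
      = ∑ u : Fin d × Fin a₂, if q = e2 u then if q' = e2 u then (1:ℂ) else 0 else 0 := by
        rw [Fintype.sum_prod_type]
    _ = ∑ u : Fin n, if q = u then if q' = u then (1:ℂ) else 0 else 0 :=
        Fintype.sum_equiv e2 _ _ (fun u => rfl)
    _ = (1 : Matrix (Fin n) (Fin n) ℂ) q q' := by
        simp [Finset.sum_ite_eq, Matrix.one_apply, eq_comm]

lemma reindex_kron_one (Mi : Matrix (Fin d) (Fin d) ℂ) :
    Matrix.reindex e2 e2 (Mi ⊗ₖ (1 : Matrix (Fin a₂) (Fin a₂) ℂ))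
    = ∑ k, (braMat e2 k)ᴴ * Mi * braMat e2 k := by
  ext p q
  obtain ⟨⟨i, k⟩, rfl⟩ := e2.surjective p
  obtain ⟨⟨i', k'⟩, rfl⟩ := e2.surjective q
  simp only [Matrix.reindex_apply, Matrix.submatrix_apply, Equiv.symm_apply_apply,
    Matrix.kroneckerMap_apply, Matrix.sum_apply, Matrix.mul_apply,
    Matrix.conjTranspose_apply, braMat, apply_ite (star : ℂ → ℂ), star_one, star_zero,
    Equiv.apply_eq_iff_eq, Prod.mk.injEq]
  rw [Finset.sum_comm]
  by_cases hkk : k = k' <;>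
    simp [hkk, ite_and, Finset.sum_ite_eq, Matrix.one_apply, eq_comm,
      Finset.sum_ite_eq', mul_comm]

end B

section Choi

variable {d D : ℕ} {ι : Type*} [Fintype ι]

/-- The Choi matrix of a Kraus family. -/
def choiOf (K : ι → Matrix (Fin d) (Fin D) ℂ) :
    Matrix (Fin d × Fin D) (Fin d × Fin D) ℂ :=
  fun p q => ∑ j, K j p.1 p.2 * star (K j q.1 q.2)

lemma apply_eq_choi (K : ι → Matrix (Fin d) (Fin D) ℂ) (σ : Matrix (Fin D) (Fin D) ℂ)
    (i₀ i₁ : Fin d) :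
    (∑ j, K j * σ * (K j)ᴴ) i₀ i₁
      = ∑ m, ∑ m', σ m m' * choiOf K (i₀, m) (i₁, m') := by
  have h1 : ∀ j, (K j * σ * (K j)ᴴ) i₀ i₁
      = ∑ m, ∑ m', σ m m' * (K j i₀ m * star (K j i₁ m')) := by
    intro j
    simp only [Matrix.mul_apply, Matrix.conjTranspose_apply, Finset.sum_mul]
    rw [Finset.sum_comm]
    refine Finset.sum_congr rfl fun m _ => Finset.sum_congr rfl fun m' _ => by ring
  simp only [Matrix.sum_apply, h1, choiOf, Finset.mul_sum]
  rw [Finset.sum_comm]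
  refine Finset.sum_congr rfl fun m _ => ?_
  rw [Finset.sum_comm]

lemma sum_conj_eq_choi (K : ι → Matrix (Fin d) (Fin D) ℂ) (m m' : Fin D) :
    (∑ j, (K j)ᴴ * K j) m m' = ∑ i, star (choiOf K (i, m) (i, m')) := by
  simp only [Matrix.sum_apply, Matrix.mul_apply, Matrix.conjTranspose_apply, choiOf,
    star_sum, star_mul', star_star]
  rw [Finset.sum_comm]

lemma choi_posSemidef (K : ι → Matrix (Fin d) (Fin D) ℂ) : (choiOf K).PosSemidef := by
  classical
  have : choiOf K = (Matrix.of fun (j : ι) (q : Fin d × Fin D) => star (K j q.1 q.2))ᴴ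
      * (Matrix.of fun (j : ι) (q : Fin d × Fin D) => star (K j q.1 q.2)) := by
    ext p q
    simp only [Matrix.mul_apply, Matrix.conjTranspose_apply, Matrix.of_apply, star_star, choiOf]
  rw [this]
  exact Matrix.posSemidef_conjTranspose_mul_self _

/-- Kraus reduction: any Kraus family has an equivalent one indexed by `Fin d × Fin D`. -/
lemma kraus_reduce (K : ι → Matrix (Fin d) (Fin D) ℂ) :
    ∃ L : Fin d × Fin D → Matrix (Fin d) (Fin D) ℂ,
      (∀ σ : Matrix (Fin D) (Fin D) ℂ, ∑ t, L t * σ * (L t)ᴴ = ∑ j, K j * σ * (K j)ᴴ) ∧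
      (∑ t, (L t)ᴴ * L t = ∑ j, (K j)ᴴ * K j) := by
  classical
  obtain ⟨B, hB⟩ : ∃ B : Matrix (Fin d × Fin D) (Fin d × Fin D) ℂ, choiOf K = Bᴴ * B := by
    open scoped MatrixOrder in
    exact ⟨CFC.sqrt (choiOf K), by
      rw [← Matrix.star_eq_conjTranspose, (CFC.sqrt_nonneg (choiOf K)).isSelfAdjoint.star_eq,
        CFC.sqrt_mul_sqrt_self (choiOf K) (choi_posSemidef K).nonneg]⟩
  set L : Fin d × Fin D → Matrix (Fin d) (Fin D) ℂ :=
    fun t => Matrix.of fun i m => star (B t (i, m)) with hL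
  have hch : choiOf L = choiOf K := by
    ext p q
    have h2 : (choiOf K) p q = (Bᴴ * B) p q := by rw [hB]
    rw [h2]
    simp only [choiOf, Matrix.mul_apply, Matrix.conjTranspose_apply, Matrix.of_apply,
      star_star, hL]
  refine ⟨L, fun σ => ?_, ?_⟩
  · ext i₀ i₁
    rw [apply_eq_choi, apply_eq_choi, hch]
  · ext m m'
    rw [sum_conj_eq_choi, sum_conj_eq_choi, hch]

end Choi

lemma sum_pad {α β γ M : Type*} [Fintype α] [Fintype β] [DecidableEq β] [Zero γ]
    [AddCommMonoid M] (g : α → β) (hg : Function.Injective g) (L : α → γ)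
    (F : β → γ → M) (hF0 : ∀ b, F b 0 = 0) :
    ∑ k, F k (if h : ∃ t, g t = k then L h.choose else 0) = ∑ t, F (g t) (L t) := by
  classical
  rw [← Finset.sum_subset (Finset.subset_univ (Finset.univ.image g))]
  · rw [Finset.sum_image (fun x _ y _ h => hg h)]
    refine Finset.sum_congr rfl fun t _ => ?_
    have h : ∃ t', g t' = g t := ⟨t, rfl⟩
    rw [dif_pos h]
    congr 1
    exact congrArg L (hg h.choose_spec)
  · intro k _ hk
    rw [dif_neg, hF0]
    simp only [Finset.mem_image, Finset.mem_univ, true_and] at hk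
    rintro ⟨t, ht⟩; exact hk ⟨t, ht⟩

lemma onb_of_isometry {D n : ℕ} (hDn : D ≤ n) (W : Matrix (Fin n) (Fin D) ℂ)
    (hW : Wᴴ * W = 1) :
    ∃ Q ∈ Matrix.unitaryGroup (Fin n) ℂ,
      ∀ (k : Fin n) (j : Fin D), Q k (Fin.castLE hDn j) = W k j := by
  classical
  set E := EuclideanSpace ℂ (Fin n)
  have hcard : Module.finrank ℂ E = Fintype.card (Fin n) := by
    simp [E]
  set v : Fin n → E := fun i => if h : (i : ℕ) < D then WithLp.toLp 2 (fun k => W k ⟨i, h⟩) else 0 with hv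
  set s : Set (Fin n) := {i | (i : ℕ) < D} with hs
  have horth : Orthonormal ℂ (s.restrict v) := by
    rw [orthonormal_iff_ite]
    rintro ⟨i, hi⟩ ⟨i', hi'⟩
    have hi2 : (i : ℕ) < D := hi
    have hi'2 : (i' : ℕ) < D := hi'
    have hWii : ∑ k, (starRingEnd ℂ) (W k ⟨i, hi2⟩) * W k ⟨i', hi'2⟩
        = (1 : Matrix (Fin D) (Fin D) ℂ) ⟨i, hi2⟩ ⟨i', hi'2⟩ := by
      rw [← hW]
      simp [Matrix.mul_apply, Matrix.conjTranspose_apply]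
    rw [PiLp.inner_apply]
    have hvi : ∀ (i : Fin n) (h : (i : ℕ) < D), (v i).ofLp = fun k => W k ⟨i, h⟩ :=
      fun i h => by simp [hv, h]
    simp only [RCLike.inner_apply]
    rw [show s.restrict v ⟨i, hi⟩ = v i from rfl, show s.restrict v ⟨i', hi'⟩ = v i' from rfl]
    simp only [hvi i hi2, hvi i' hi'2]
    rw [Finset.sum_congr rfl fun _ _ => mul_comm _ _, hWii, Matrix.one_apply]
    by_cases hii : i = i'
    · subst hii
      simp
    · rw [if_neg, if_neg]
      · simpa [Subtype.ext_iff] using hii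
      · simp [Fin.ext_iff]; omega
  obtain ⟨b, hb⟩ := horth.exists_orthonormalBasis_extension_of_card_eq hcard
  refine ⟨Matrix.of fun k i => b i k, ?_, ?_⟩
  · rw [Matrix.mem_unitaryGroup_iff']
    ext i j
    have := orthonormal_iff_ite.mp b.orthonormal i j
    rw [PiLp.inner_apply] at this
    simp only [RCLike.inner_apply] at this
    simpa [Matrix.mul_apply, Matrix.one_apply, Matrix.star_eq_conjTranspose, mul_comm,
      Matrix.conjTranspose_apply] using this
  · intro k j
    have hmem : (Fin.castLE hDn j) ∈ s := by simp [hs]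
    show b (Fin.castLE hDn j) k = W k j
    rw [hb (Fin.castLE hDn j) hmem]
    simp only [hv, dif_pos (show ((Fin.castLE hDn j : Fin n) : ℕ) < D from j.isLt)]
    rfl

lemma extend_isometry {D n : ℕ} (hDn : D ≤ n) (A V : Matrix (Fin n) (Fin D) ℂ)
    (hA : Aᴴ * A = 1) (hV : Vᴴ * V = 1) :
    ∃ U ∈ Matrix.unitaryGroup (Fin n) ℂ, U * A = V := by
  obtain ⟨QA, hQA, hQAc⟩ := onb_of_isometry hDn A hA
  obtain ⟨QV, hQV, hQVc⟩ := onb_of_isometry hDn V hV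
  refine ⟨QV * QAᴴ, ?_, ?_⟩
  · exact mul_mem hQV (by simpa [Matrix.star_eq_conjTranspose] using Unitary.star_mem hQA)
  · set S : Matrix (Fin n) (Fin D) ℂ := fun i j => if i = Fin.castLE hDn j then 1 else 0 with hS
    have hAS : A = QA * S := by
      ext k j
      rw [Matrix.mul_apply]
      simp [hS, Matrix.mul_apply, ← hQAc k j]
    have hVS : V = QV * S := by
      ext k j
      rw [Matrix.mul_apply]
      simp [hS, Matrix.mul_apply, ← hQVc k j]
    have hQAu : QAᴴ * QA = 1 := by
      have := Matrix.mem_unitaryGroup_iff'.mp hQA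
      simpa [Matrix.star_eq_conjTranspose] using this
    rw [hAS, hVS, ← Matrix.mul_assoc, Matrix.mul_assoc QV QAᴴ QA, hQAu, Matrix.mul_one]

open B in
/-- Trace against a reindexed `Mi ⊗ₖ 1` decomposes along the bras. -/
lemma trace_Mt {d a₂ n : ℕ} (e2 : Fin d × Fin a₂ ≃ Fin n)
    (Y : Matrix (Fin n) (Fin n) ℂ) (Mi : Matrix (Fin d) (Fin d) ℂ) :
    (Y * Matrix.reindex e2 e2 (Mi ⊗ₖ (1 : Matrix (Fin a₂) (Fin a₂) ℂ))).trace
      = ∑ k, (braMat e2 k * Y * (braMat e2 k)ᴴ * Mi).trace := by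
  rw [reindex_kron_one, Finset.mul_sum, Matrix.trace_sum]
  refine Finset.sum_congr rfl fun k _ => ?_
  rw [show Y * ((braMat e2 k)ᴴ * Mi * braMat e2 k)
      = Y * ((braMat e2 k)ᴴ * Mi) * braMat e2 k by
    simp [Matrix.mul_assoc]]
  rw [Matrix.trace_mul_cycle]
  simp [Matrix.mul_assoc]

end Stmt1Aux

lemma fisher_congr {n₁ n₂ : Type*} [Fintype n₁] [Fintype n₂] {r : ℕ}
    {ρ₁ ρ₁' : Matrix n₁ n₁ ℂ} {ρ₂ ρ₂' : Matrix n₂ n₂ ℂ}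
    {M₁ : Fin r → Matrix n₁ n₁ ℂ} {M₂ : Fin r → Matrix n₂ n₂ ℂ}
    (h : ∀ i, (ρ₁ * M₁ i).trace = (ρ₂ * M₂ i).trace)
    (h' : ∀ i, (ρ₁' * M₁ i).trace = (ρ₂' * M₂ i).trace) :
    FisherInfo ρ₁ ρ₁' M₁ = FisherInfo ρ₂ ρ₂' M₂ := by
  unfold FisherInfo
  exact Finset.sum_congr rfl fun i _ => by rw [h i, h' i]

/-- the QPFI equals the unitary-preprocessing-optimized Fisher information on
the enlarged system `ℂ^D ⊗ ℂ^{a₁} ≃ ℂ^d ⊗ ℂ^{a₂} ≃ ℂ^{D·a₁}`, with the state extended by the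
ancilla projection `E₀` and the measurement extended by the identity. -/
theorem stmt1 {D d r a₁ a₂ : ℕ} (hD : 1 ≤ D) (hd : 1 ≤ d) (hr : 1 ≤ r)
    (ha₁ : 0 < a₁) (ha₂ : 0 < a₂) (hdim : D * a₁ = d * a₂) (ha : d ^ 2 ≤ a₁)
    (ρ : ℝ → Matrix (Fin D) (Fin D) ℂ) (ρ' : Matrix (Fin D) (Fin D) ℂ) (θ₀ : ℝ)
    (hdens : ∀ θ, IsDensityMatrix (ρ θ))
    (hder : ∀ i j, HasDerivAt (fun θ => ρ θ i j) (ρ' i j) θ₀)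
    (M : Fin r → Matrix (Fin d) (Fin d) ℂ) (hM : IsPOVM M)
    (E₀ : Matrix (Fin a₁) (Fin a₁) ℂ)
    (hE₀ : E₀ = Matrix.single (⟨0, ha₁⟩ : Fin a₁) (⟨0, ha₁⟩ : Fin a₁) (1 : ℂ)) :
    QPFI (ρ θ₀) ρ' M =
      QUPFI (Matrix.reindex finProdFinEquiv finProdFinEquiv ((ρ θ₀) ⊗ₖ E₀))
        (Matrix.reindex finProdFinEquiv finProdFinEquiv (ρ' ⊗ₖ E₀))
        (fun i => Matrix.reindex (finProdFinEquiv.trans (finCongr hdim.symm))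
            (finProdFinEquiv.trans (finCongr hdim.symm))
            ((M i) ⊗ₖ (1 : Matrix (Fin a₂) (Fin a₂) ℂ))) := by
  classical
  subst hE₀
  have hDn : D ≤ D * a₁ := Nat.le_mul_of_pos_right D ha₁
  set e2 : Fin d × Fin a₂ ≃ Fin (D * a₁) := finProdFinEquiv.trans (finCongr hdim.symm) with he2
  set A := Stmt1Aux.embMat ha₁ D with hAdef
  have hAiso : Aᴴ * A = 1 := Stmt1Aux.embMat_isometry ha₁
  have hρt : ∀ σ : Matrix (Fin D) (Fin D) ℂ,
      Matrix.reindex finProdFinEquiv finProdFinEquiv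
        (σ ⊗ₖ Matrix.single (⟨0, ha₁⟩ : Fin a₁) (⟨0, ha₁⟩ : Fin a₁) (1 : ℂ))
      = A * σ * Aᴴ := Stmt1Aux.reindex_kron_E0 ha₁
  unfold QPFI QUPFI
  congr 1
  ext x
  simp only [Set.mem_setOf_eq]
  constructor
  · rintro ⟨E, ⟨κ, K, hK1, hK2⟩, rfl⟩
    -- hard direction: build a unitary from the channel
    obtain ⟨L, hL1, hL2⟩ := Stmt1Aux.kraus_reduce K
    have hdD : d * D ≤ a₂ := by nlinarith
    set g : Fin d × Fin D → Fin a₂ := fun t => Fin.castLE hdD (finProdFinEquiv t) with hg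
    have hginj : Function.Injective g := by
      intro t t' h
      have : (finProdFinEquiv t : Fin (d * D)) = finProdFinEquiv t' := by
        rwa [Fin.castLE_inj] at h
      exact finProdFinEquiv.injective this
    set L' : Fin a₂ → Matrix (Fin d) (Fin D) ℂ :=
      fun k => if h : ∃ t, g t = k then L h.choose else 0 with hL'
    set V : Matrix (Fin (D * a₁)) (Fin D) ℂ :=
      ∑ k, (Stmt1Aux.B.braMat e2 k)ᴴ * L' k with hV
    have hbraV : ∀ k, Stmt1Aux.B.braMat e2 k * V = L' k := by
      intro k
      rw [hV, Matrix.mul_sum]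
      have : ∀ k', Stmt1Aux.B.braMat e2 k * ((Stmt1Aux.B.braMat e2 k')ᴴ * L' k')
          = (if k = k' then (1 : Matrix (Fin d) (Fin d) ℂ) else 0) * L' k' := by
        intro k'
        rw [← Matrix.mul_assoc, Stmt1Aux.B.braMat_mul_conj]
      rw [Finset.sum_congr rfl fun k' _ => this k']
      have h2 : ∀ k', (if k = k' then (1 : Matrix (Fin d) (Fin d) ℂ) else 0) * L' k'
          = if k = k' then L' k' else 0 := by
        intro k'
        split <;> simp
      rw [Finset.sum_congr rfl fun k' _ => h2 k']
      simp [Finset.sum_ite_eq]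
    have hVV : Vᴴ * V = 1 := by
      have h1 : Vᴴ * V = ∑ k, (L' k)ᴴ * L' k := by
        rw [hV, Matrix.conjTranspose_sum, Matrix.sum_mul]
        refine Finset.sum_congr rfl fun k _ => ?_
        rw [Matrix.conjTranspose_mul, Matrix.conjTranspose_conjTranspose,
          Matrix.mul_assoc]
        rw [show Stmt1Aux.B.braMat e2 k * (∑ k', (Stmt1Aux.B.braMat e2 k')ᴴ * L' k')
            = L' k from hbraV k]
      rw [h1, hL']
      rw [Stmt1Aux.sum_pad g hginj L (fun _ X => Xᴴ * X) (by simp)]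
      rw [hL2, hK1]
    have hsum : ∀ σ : Matrix (Fin D) (Fin D) ℂ,
        ∑ k, L' k * σ * (L' k)ᴴ = ∑ j, K j * σ * (K j)ᴴ := by
      intro σ
      rw [hL', Stmt1Aux.sum_pad g hginj L (fun _ X => X * σ * Xᴴ) (by simp)]
      exact hL1 σ
    obtain ⟨U, hU, hUA⟩ := Stmt1Aux.extend_isometry hDn A V hAiso hVV
    have hconj : ∀ σ : Matrix (Fin D) (Fin D) ℂ,
        U * (A * σ * Aᴴ) * Uᴴ = V * σ * Vᴴ := by
      intro σ
      have : U * (A * σ * Aᴴ) * Uᴴ = (U * A) * σ * (U * A)ᴴ := by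
        rw [Matrix.conjTranspose_mul]
        simp [Matrix.mul_assoc]
      rw [this, hUA]
    have htr : ∀ (σ : Matrix (Fin D) (Fin D) ℂ) (i : Fin r),
        (E σ * M i).trace =
          ((U * (A * σ * Aᴴ) * Uᴴ) *
            Matrix.reindex e2 e2 ((M i) ⊗ₖ (1 : Matrix (Fin a₂) (Fin a₂) ℂ))).trace := by
      intro σ i
      rw [hconj σ, Stmt1Aux.trace_Mt e2 (V * σ * Vᴴ) (M i), hK2]
      have hterm : ∀ k, Stmt1Aux.B.braMat e2 k * (V * σ * Vᴴ) *
          (Stmt1Aux.B.braMat e2 k)ᴴ * M i = L' k * σ * (L' k)ᴴ * M i := by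
        intro k
        have h2 : Stmt1Aux.B.braMat e2 k * (V * σ * Vᴴ) * (Stmt1Aux.B.braMat e2 k)ᴴ
            = (Stmt1Aux.B.braMat e2 k * V) * σ * (Stmt1Aux.B.braMat e2 k * V)ᴴ := by
          rw [Matrix.conjTranspose_mul]
          simp [Matrix.mul_assoc]
        rw [h2, hbraV k]
      rw [Finset.sum_congr rfl fun k _ => congrArg Matrix.trace (hterm k)]
      rw [← Matrix.trace_sum, ← Matrix.sum_mul, hsum σ]
    refine ⟨U, hU, ?_⟩
    rw [hρt (ρ θ₀), hρt ρ']
    exact fisher_congr (fun i => htr (ρ θ₀) i) (fun i => htr ρ' i)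
  · rintro ⟨U, hU, rfl⟩
    -- easy direction: the unitary yields a channel
    set Kk : Fin a₂ → Matrix (Fin d) (Fin D) ℂ :=
      fun k => Stmt1Aux.B.braMat e2 k * U * A with hKk
    have hK1 : ∑ k, (Kk k)ᴴ * Kk k = 1 := by
      have h1 : ∀ k, (Kk k)ᴴ * Kk k
          = Aᴴ * (Uᴴ * (((Stmt1Aux.B.braMat e2 k)ᴴ * Stmt1Aux.B.braMat e2 k) * (U * A))) := by
        intro k
        rw [hKk]
        simp only [Matrix.conjTranspose_mul]
        simp [Matrix.mul_assoc]
      rw [Finset.sum_congr rfl fun k _ => h1 k]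
      rw [← Matrix.mul_sum, ← Matrix.mul_sum, ← Matrix.sum_mul,
        Stmt1Aux.B.sum_conj_braMat e2, Matrix.one_mul]
      have hUu : Uᴴ * U = 1 := by
        have := Matrix.mem_unitaryGroup_iff'.mp hU
        simpa [Matrix.star_eq_conjTranspose] using this
      rw [← Matrix.mul_assoc Uᴴ U A, hUu, Matrix.one_mul, hAiso]
    have htr : ∀ (σ : Matrix (Fin D) (Fin D) ℂ) (i : Fin r),
        ((∑ k, Kk k * σ * (Kk k)ᴴ) * M i).trace =
          ((U * (A * σ * Aᴴ) * Uᴴ) *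
            Matrix.reindex e2 e2 ((M i) ⊗ₖ (1 : Matrix (Fin a₂) (Fin a₂) ℂ))).trace := by
      intro σ i
      rw [Stmt1Aux.trace_Mt e2 (U * (A * σ * Aᴴ) * Uᴴ) (M i)]
      rw [Matrix.sum_mul, Matrix.trace_sum]
      refine Finset.sum_congr rfl fun k _ => congrArg Matrix.trace ?_
      rw [hKk]
      simp only [Matrix.conjTranspose_mul]
      simp [Matrix.mul_assoc]
    refine ⟨fun σ => ∑ k, Kk k * σ * (Kk k)ᴴ, ⟨a₂, Kk, hK1, fun σ => rfl⟩, ?_⟩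
    rw [hρt (ρ θ₀), hρt ρ']
    exact (fisher_congr (fun i => htr (ρ θ₀) i) (fun i => htr ρ' i)).symm
end
end

section
/- Fix integers D, d, r ≥ 1, a differentiable state family ρ at θ₀ on ℂ^D, and a POVM M on ℂ^d with r outcomes; assume the supremum defining F^P(ρ₀, ρ₀', M) is finite. For 0 < ε ≤ 1 define the POVM M^{(ε)} by Mᵢ^{(ε)} = (1−ε)Mᵢ + ε·Tr(Mᵢ)·(1/d)·1. Then F^P(ρ₀, ρ₀', M) = lim_{ε→0⁺} F^P(ρ₀, ρ₀', M^{(ε)}), and for every ε ∈ (0,1] the supremum defining F^P(ρ₀, ρ₀', M^{(ε)}) is attained: there exists a quantum channel ℰ from D×D to d×d complex matrices with F(ℰ(ρ₀), ℰ(ρ₀'), M^{(ε)}) = F^P(ρ₀, ρ₀', M^{(ε)}). -/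
open scoped Matrix Kronecker ComplexOrder
open Classical

noncomputable section
set_option linter.unusedSectionVars false

variable {n m : Type*} [Fintype n] [Fintype m]

lemma psd_diag_nonneg {A : Matrix n n ℂ} (hA : A.PosSemidef) (i : n) : 0 ≤ A i i := by
  classical
  have := hA.dotProduct_mulVec_nonneg (Pi.single i 1)
  simpa [dotProduct, Pi.single_apply, apply_ite] using this

lemma psd_sum {r : ℕ} (f : Fin r → Matrix n n ℂ) (h : ∀ i, (f i).PosSemidef) :
    (∑ i, f i).PosSemidef := by
  classical
  exact Finset.sum_induction f _ (fun a b ha hb => ha.add hb) Matrix.PosSemidef.zero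
    (fun i _ => h i)

lemma psd_trace_nonneg {A : Matrix n n ℂ} (hA : A.PosSemidef) : 0 ≤ A.trace := by
  classical
  exact Finset.sum_nonneg fun i _ => psd_diag_nonneg hA i

lemma psd_trace_mul_nonneg [DecidableEq n] {A B : Matrix n n ℂ} (hA : A.PosSemidef)
    (hB : B.PosSemidef) : 0 ≤ (A * B).trace := by
  obtain ⟨C, rfl⟩ : ∃ C : Matrix n n ℂ, A = Cᴴ * C := by
    open scoped MatrixOrder in
    exact CStarAlgebra.nonneg_iff_eq_star_mul_self.mp hA.nonneg
  have := psd_trace_nonneg (hB.mul_mul_conjTranspose_same C)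
  rwa [Matrix.trace_mul_cycle] at this

lemma psd_eq_zero_of_trace_eq_zero [DecidableEq n] {A : Matrix n n ℂ} (hA : A.PosSemidef)
    (h : A.trace = 0) : A = 0 := by
  have hd : ∀ i, A i i = 0 := by
    have := (Finset.sum_eq_zero_iff_of_nonneg
      (fun i _ => psd_diag_nonneg hA i)).mp h
    intro i
    exact this i (Finset.mem_univ i)
  ext i j
  have hcol : A *ᵥ Pi.single j 1 = 0 := by
    rw [← hA.dotProduct_mulVec_zero_iff]
    have : star (Pi.single j 1 : n → ℂ) ⬝ᵥ A *ᵥ Pi.single j 1 = A j j := by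
      simp [dotProduct, Matrix.mulVec, Pi.single_apply, apply_ite]
    rw [this, hd j]
  have := congrFun hcol i
  simpa [Matrix.mulVec, dotProduct, Pi.single_apply] using this

lemma complex_nonneg_re {z : ℂ} (hz : 0 ≤ z) : z = (z.re : ℂ) ∧ 0 ≤ z.re := by
  rw [Complex.le_def] at hz
  exact ⟨Complex.ext (by simp) (by simp [hz.2.symm]), hz.1⟩

section Channel
variable {κ : ℕ} (K : Fin κ → Matrix n m ℂ)

/-- The Kraus map. -/
def Emap (σ : Matrix m m ℂ) : Matrix n n ℂ := ∑ j, K j * σ * (K j)ᴴ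

lemma Emap_psd {σ : Matrix m m ℂ} (hσ : σ.PosSemidef) : (Emap K σ).PosSemidef :=
  psd_sum _ fun j => hσ.mul_mul_conjTranspose_same (K j)

lemma Emap_trace [DecidableEq m] (hTP : ∑ j, (K j)ᴴ * K j = 1) (σ : Matrix m m ℂ) :
    (Emap K σ).trace = σ.trace := by
  have : ∀ j, (K j * σ * (K j)ᴴ).trace = ((K j)ᴴ * K j * σ).trace := fun j =>
    Matrix.trace_mul_cycle (K j) σ (K j)ᴴ
  rw [Emap, Matrix.trace_sum]
  calc ∑ j, (K j * σ * (K j)ᴴ).trace = ∑ j, ((K j)ᴴ * K j * σ).trace := by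
        exact Finset.sum_congr rfl fun j _ => this j
    _ = ((∑ j, (K j)ᴴ * K j) * σ).trace := by rw [Finset.sum_mul, Matrix.trace_sum]
    _ = σ.trace := by rw [hTP, Matrix.one_mul]

lemma hasDerivAt_trace_Emap (W : Matrix n n ℂ) (ρ : ℝ → Matrix m m ℂ)
    (ρ' : Matrix m m ℂ) (θ₀ : ℝ)
    (hder : ∀ i j, HasDerivAt (fun θ => ρ θ i j) (ρ' i j) θ₀) :
    HasDerivAt (fun θ => ((Emap K (ρ θ)) * W).trace) ((Emap K ρ' * W).trace) θ₀ := by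
  simp only [Emap, Matrix.trace, Matrix.diag, Matrix.mul_apply, Matrix.sum_apply,
    Matrix.conjTranspose_apply]
  apply HasDerivAt.fun_sum; intro p _
  apply HasDerivAt.fun_sum; intro c _
  apply HasDerivAt.mul_const
  apply HasDerivAt.fun_sum; intro j _
  apply HasDerivAt.fun_sum; intro b _
  apply HasDerivAt.mul_const
  apply HasDerivAt.fun_sum; intro a _
  exact (hder a b).const_mul _

lemma re_trace_Emap_deriv_zero [DecidableEq n] {W : Matrix n n ℂ} (hW : W.PosSemidef)
    {ρ : ℝ → Matrix m m ℂ} {ρ' : Matrix m m ℂ} {θ₀ : ℝ}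
    (hpsd : ∀ θ, (ρ θ).PosSemidef)
    (hder : ∀ i j, HasDerivAt (fun θ => ρ θ i j) (ρ' i j) θ₀)
    (hzero : ((Emap K (ρ θ₀)) * W).trace = 0) :
    ((Emap K ρ') * W).trace.re = 0 := by
  have hD : HasDerivAt (fun θ => (((Emap K (ρ θ)) * W).trace).re)
      (((Emap K ρ') * W).trace.re) θ₀ := by
    have h1 := hasDerivAt_trace_Emap K W ρ ρ' θ₀ hder
    exact (Complex.reCLM.hasFDerivAt.comp_hasDerivAt θ₀ h1)
  have hmin : IsLocalMin (fun θ => (((Emap K (ρ θ)) * W).trace).re) θ₀ := by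
    apply Filter.Eventually.of_forall
    intro θ
    have h1 : 0 ≤ ((Emap K (ρ θ)) * W).trace :=
      psd_trace_mul_nonneg (Emap_psd K (hpsd θ)) hW
    have h2 := (complex_nonneg_re h1).2
    simp only [hzero]
    simpa using h2
  exact hmin.hasDerivAt_eq_zero hD

lemma trace_deriv_zero {ρ : ℝ → Matrix m m ℂ} {ρ' : Matrix m m ℂ} {θ₀ : ℝ}
    (htr : ∀ θ, (ρ θ).trace = 1)
    (hder : ∀ i j, HasDerivAt (fun θ => ρ θ i j) (ρ' i j) θ₀) :
    ρ'.trace = 0 := by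
  have h1 : HasDerivAt (fun θ => (ρ θ).trace) ρ'.trace θ₀ := by
    simp only [Matrix.trace, Matrix.diag]
    exact HasDerivAt.fun_sum fun i _ => hder i i
  have h2 : HasDerivAt (fun θ : ℝ => (ρ θ).trace) 0 θ₀ := by
    have : (fun θ : ℝ => (ρ θ).trace) = fun _ => (1 : ℂ) := funext htr
    rw [this]
    exact hasDerivAt_const θ₀ 1
  exact h1.unique h2
end Channel



lemma Emap_entry {κ : ℕ} (K : Fin κ → Matrix n m ℂ) (σ : Matrix m m ℂ) (k l : n) :
    (∑ j, K j * σ * (K j)ᴴ) k l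
      = ∑ a, ∑ b, σ a b * (∑ j, K j k a * star (K j l b)) := by
  simp only [Matrix.sum_apply, Matrix.mul_apply, Matrix.conjTranspose_apply,
    Finset.sum_mul, Finset.mul_sum]
  rw [Finset.sum_comm]
  conv_lhs => enter [2, b]; rw [Finset.sum_comm]
  rw [Finset.sum_comm]
  exact Finset.sum_congr rfl fun a _ => Finset.sum_congr rfl fun b _ =>
    Finset.sum_congr rfl fun j _ => by ring

lemma TP_entry {κ : ℕ} (K : Fin κ → Matrix n m ℂ) (a b : m) :
    (∑ j, (K j)ᴴ * K j) a b = ∑ k, star (∑ j, K j k a * star (K j k b)) := by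
  simp only [Matrix.sum_apply, Matrix.mul_apply, Matrix.conjTranspose_apply]
  rw [Finset.sum_comm]
  refine Finset.sum_congr rfl fun k _ => ?_
  simp [star_sum, star_mul', mul_comm]

set_option linter.unusedSectionVars false

lemma kraus_eq_of_key [DecidableEq m] {κ₁ κ₂ : ℕ} (K : Fin κ₁ → Matrix n m ℂ)
    (L : Fin κ₂ → Matrix n m ℂ)
    (key : ∀ (k : n) (a : m) (l : n) (b : m),
      ∑ j, K j k a * star (K j l b) = ∑ j, L j k a * star (L j l b)) :
    (∀ σ : Matrix m m ℂ, ∑ j, K j * σ * (K j)ᴴ = ∑ j, L j * σ * (L j)ᴴ) ∧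
      (∑ j, (K j)ᴴ * K j = ∑ j, (L j)ᴴ * L j) := by
  constructor
  · intro σ
    ext k l
    rw [Emap_entry, Emap_entry]
    exact Finset.sum_congr rfl fun a _ => Finset.sum_congr rfl fun b _ => by rw [key]
  · ext a b
    rw [TP_entry, TP_entry]
    exact Finset.sum_congr rfl fun k _ => by rw [key]

/-- Every channel admits a Kraus representation with exactly `d*D` operators. -/
lemma channel_reduce {D d : ℕ} {κ : ℕ} (L : Fin κ → Matrix (Fin d) (Fin D) ℂ)
    (hTP : ∑ j, (L j)ᴴ * L j = 1) :
    ∃ K : Fin (d * D) → Matrix (Fin d) (Fin D) ℂ,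
      (∑ j, (K j)ᴴ * K j = 1) ∧
      (∀ σ : Matrix (Fin D) (Fin D) ℂ, ∑ j, K j * σ * (K j)ᴴ = ∑ j, L j * σ * (L j)ᴴ) := by
  classical
  set C : Matrix (Fin d × Fin D) (Fin d × Fin D) ℂ :=
    Matrix.of fun u v => ∑ j, L j u.1 u.2 * star (L j v.1 v.2) with hC
  have hCpsd : C.PosSemidef := by
    refine Matrix.PosSemidef.of_dotProduct_mulVec_nonneg ?_ ?_
    · ext u v
      simp only [Matrix.conjTranspose_apply, hC, Matrix.of_apply, star_sum, star_mul',
        star_star]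
      exact Finset.sum_congr rfl fun j _ => by ring
    · intro x
      have hrw : star x ⬝ᵥ C *ᵥ x
          = ∑ j, star (∑ v, star (L j v.1 v.2) * x v) * (∑ v, star (L j v.1 v.2) * x v) := by
        simp only [dotProduct, Matrix.mulVec, hC, Matrix.of_apply, star_sum, star_mul',
          star_star, Finset.sum_mul, Finset.mul_sum]
        rw [Finset.sum_comm]
        conv_lhs => enter [2, u]; rw [Finset.sum_comm]
        rw [Finset.sum_comm]
        refine Finset.sum_congr rfl fun j _ => ?_
        refine Finset.sum_congr rfl fun u _ => Finset.sum_congr rfl fun v _ => ?_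
        simp only [Pi.star_apply]
        ring
      rw [hrw]
      exact Finset.sum_nonneg fun j _ => star_mul_self_nonneg _
  obtain ⟨B, hB⟩ : ∃ B : Matrix (Fin d × Fin D) (Fin d × Fin D) ℂ, C = Bᴴ * B := by
    open scoped MatrixOrder in
    exact CStarAlgebra.nonneg_iff_eq_star_mul_self.mp hCpsd.nonneg
  set e : Fin (d * D) ≃ Fin d × Fin D := finProdFinEquiv.symm with he
  refine ⟨fun j => Matrix.of fun k a => star (B (e j) (k, a)), ?_, ?_⟩ <;>
  · have key : ∀ (k : Fin d) (a : Fin D) (l : Fin d) (b : Fin D),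
        ∑ j : Fin (d * D), (star (B (e j) (k, a))) * star (star (B (e j) (l, b)))
          = ∑ j : Fin κ, L j k a * star (L j l b) := by
      intro k a l b
      have h1 : ∑ j : Fin (d * D), (star (B (e j) (k, a))) * star (star (B (e j) (l, b)))
          = ∑ u : Fin d × Fin D, star (B u (k, a)) * B u (l, b) := by
        rw [← Equiv.sum_comp e (fun u => star (B u (k, a)) * B u (l, b))]
        simp [star_star]
      rw [h1]
      have h2 : (Bᴴ * B) (k, a) (l, b) = C (k, a) (l, b) := by rw [← hB]
      simpa [Matrix.mul_apply, Matrix.conjTranspose_apply, hC] using h2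
    have := kraus_eq_of_key (fun j => Matrix.of fun k a => star (B (e j) (k, a))) L
      (by intro k a l b; simpa using key k a l b)
    first
    | exact this.2.trans hTP
    | exact fun σ => (this.1 σ)


section PerChannel

variable {d r : ℕ} (M : Fin r → Matrix (Fin d) (Fin d) ℂ)
  (Mpert : ℝ → Fin r → Matrix (Fin d) (Fin d) ℂ)
  (hMpert : ∀ ε i, Mpert ε i = ((1 - ε : ℝ) : ℂ) • M i +
      (((ε : ℝ) : ℂ) * (M i).trace / (d : ℂ)) • (1 : Matrix (Fin d) (Fin d) ℂ))
  (R R' : Matrix (Fin d) (Fin d) ℂ)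
  (hRtr : R.trace = 1) (hR'tr : R'.trace = 0)
  (hP : ∀ i, 0 ≤ (R * M i).trace)
  (ht : ∀ i, 0 ≤ (M i).trace)
  (hQ : ∀ i, (R * M i).trace = 0 → (R' * M i).trace.re = 0)

include hMpert in
lemma pert_trace (A : Matrix (Fin d) (Fin d) ℂ) (ε : ℝ) (i : Fin r) :
    (A * Mpert ε i).trace = ((1 - ε : ℝ) : ℂ) * (A * M i).trace
      + ((ε : ℝ) : ℂ) * (M i).trace / (d : ℂ) * A.trace := by
  rw [hMpert]
  simp [Matrix.mul_add, Matrix.mul_smul, Matrix.trace_add, Matrix.trace_smul, smul_eq_mul]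

include hMpert hRtr hP ht in
lemma pert_trace_den (ε : ℝ) (i : Fin r) :
    (R * Mpert ε i).trace
      = (((1 - ε) * ((R * M i).trace.re) + ε * ((M i).trace.re / d) : ℝ) : ℂ) := by
  rw [pert_trace M Mpert hMpert R ε i, hRtr, mul_one]
  conv_lhs => rw [(complex_nonneg_re (hP i)).1, (complex_nonneg_re (ht i)).1]
  push_cast
  ring

include hMpert hR'tr in
lemma pert_trace_num (ε : ℝ) (i : Fin r) :
    (R' * Mpert ε i).trace.re = (1 - ε) * ((R' * M i).trace.re) := by
  rw [pert_trace M Mpert hMpert R' ε i, hR'tr, mul_zero, add_zero,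
    Complex.re_ofReal_mul]

include hMpert hRtr hR'tr hP ht hQ in
lemma fisher_pert_eq {ε : ℝ} (hε0 : 0 < ε) (hε1 : ε < 1) :
    FisherInfo R R' (Mpert ε) = ∑ i, if (R * M i).trace = 0 then 0
      else ((1 - ε) * (R' * M i).trace.re) ^ 2
        / ((1 - ε) * (R * M i).trace.re + ε * ((M i).trace.re / d)) := by
  unfold FisherInfo
  refine Finset.sum_congr rfl fun i _ => ?_
  by_cases h : (R * M i).trace = 0
  · rw [if_pos h]
    by_cases h2 : (R * Mpert ε i).trace = 0
    · rw [if_pos h2]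
    · rw [if_neg h2, pert_trace_num M Mpert hMpert R' hR'tr, hQ i h, mul_zero]
      simp
  · rw [if_neg h]
    have hppos : 0 < (R * M i).trace.re := by
      rcases lt_or_eq_of_le (complex_nonneg_re (hP i)).2 with h' | h'
      · exact h'
      · exact absurd (by rw [(complex_nonneg_re (hP i)).1, ← h']; simp) h
    have hτ := (complex_nonneg_re (ht i)).2
    have hdenpos : 0 < (1 - ε) * (R * M i).trace.re + ε * ((M i).trace.re / d) := by
      have h1 : 0 < (1 - ε) * (R * M i).trace.re := by nlinarith
      have h2 : 0 ≤ ε * ((M i).trace.re / d) := by positivity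
      linarith
    have hden := pert_trace_den M Mpert hMpert R hRtr hP ht ε i
    have hne : (R * Mpert ε i).trace ≠ 0 := by
      rw [hden]
      exact_mod_cast hdenpos.ne'
    rw [if_neg hne, pert_trace_num M Mpert hMpert R' hR'tr, hden]
    simp

include hMpert hRtr hR'tr hP ht hQ in
lemma fisher_pert_le {ε : ℝ} (hε0 : 0 < ε) (hε1 : ε < 1) :
    FisherInfo R R' (Mpert ε) ≤ FisherInfo R R' M := by
  rw [fisher_pert_eq M Mpert hMpert R R' hRtr hR'tr hP ht hQ hε0 hε1]
  unfold FisherInfo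
  refine Finset.sum_le_sum fun i _ => ?_
  by_cases h : (R * M i).trace = 0
  · rw [if_pos h, if_pos h]
  · rw [if_neg h, if_neg h]
    have hppos : 0 < (R * M i).trace.re := by
      rcases lt_or_eq_of_le (complex_nonneg_re (hP i)).2 with h' | h'
      · exact h'
      · exact absurd (by rw [(complex_nonneg_re (hP i)).1, ← h']; simp) h
    have hτ := (complex_nonneg_re (ht i)).2
    have hc : 0 ≤ ε * ((M i).trace.re / d) := by positivity
    have hdenpos : 0 < (1 - ε) * (R * M i).trace.re + ε * ((M i).trace.re / d) := by
      nlinarith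
    rw [div_le_div_iff₀ hdenpos hppos]
    have hs : (1 - ε) ^ 2 ≤ 1 - ε := by nlinarith
    nlinarith [sq_nonneg ((R' * M i).trace.re),
      mul_nonneg hc (sq_nonneg ((R' * M i).trace.re)),
      mul_le_mul_of_nonneg_right hs
        (mul_nonneg (sq_nonneg ((R' * M i).trace.re)) hppos.le)]

include hMpert hRtr hR'tr hP ht hQ in
lemma fisher_pert_tendsto :
    Filter.Tendsto (fun ε : ℝ => FisherInfo R R' (Mpert ε)) (nhdsWithin 0 (Set.Ioi 0))
      (nhds (FisherInfo R R' M)) := by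
  set G : ℝ → ℝ := fun ε => ∑ i, if (R * M i).trace = 0 then 0
    else ((1 - ε) * (R' * M i).trace.re) ^ 2
      / ((1 - ε) * (R * M i).trace.re + ε * ((M i).trace.re / d)) with hG
  have hcont : Filter.Tendsto G (nhds 0) (nhds (G 0)) := by
    rw [hG]
    apply tendsto_finset_sum
    intro i _
    by_cases h : (R * M i).trace = 0
    · simp only [if_pos h]
      exact tendsto_const_nhds
    · simp only [if_neg h]
      have hppos : 0 < (R * M i).trace.re := by
        rcases lt_or_eq_of_le (complex_nonneg_re (hP i)).2 with h' | h'
        · exact h'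
        · exact absurd (by rw [(complex_nonneg_re (hP i)).1, ← h']; simp) h
      apply Filter.Tendsto.div
      · exact (by fun_prop : ContinuousAt (fun ε : ℝ =>
          ((1 - ε) * (R' * M i).trace.re) ^ 2) 0)
      · exact (by fun_prop : ContinuousAt (fun ε : ℝ =>
          (1 - ε) * (R * M i).trace.re + ε * ((M i).trace.re / d)) 0)
      · simpa using hppos.ne'
  have hG0 : G 0 = FisherInfo R R' M := by
    rw [hG]
    unfold FisherInfo
    refine Finset.sum_congr rfl fun i _ => ?_
    by_cases h : (R * M i).trace = 0
    · rw [if_pos h, if_pos h]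
    · rw [if_neg h, if_neg h]
      norm_num
  have heq : ∀ᶠ ε in nhdsWithin (0:ℝ) (Set.Ioi 0), FisherInfo R R' (Mpert ε) = G ε := by
    filter_upwards [Ioo_mem_nhdsGT_of_mem (by norm_num : (0:ℝ) ∈ Set.Ico 0 1)] with ε hε
    exact fisher_pert_eq M Mpert hMpert R R' hRtr hR'tr hP ht hQ hε.1 hε.2
  have h2 := hcont.mono_left (nhdsWithin_le_nhds : nhdsWithin (0:ℝ) (Set.Ioi 0) ≤ nhds 0)
  rw [hG0] at h2
  exact h2.congr' (heq.mono fun ε h => h.symm)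

end PerChannel


section Compactness

/-- The set of `d*D`-tuples of Kraus operators of a channel. -/
def KrausSet (D d : ℕ) : Set (Fin (d * D) → Matrix (Fin d) (Fin D) ℂ) :=
  {K | ∑ j, (K j)ᴴ * K j = 1}

lemma sum_diag_stdBasis (d : ℕ) :
    ∑ a : Fin d, Matrix.single a a (1 : ℂ) = 1 := by
  ext i j
  rw [Matrix.sum_apply]
  have hterm : ∀ a : Fin d, (Matrix.single a a (1:ℂ)) i j
      = if a = i then (if i = j then (1:ℂ) else 0) else 0 := by
    intro a
    by_cases h1 : a = i <;> by_cases h2 : i = j <;>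
      simp [Matrix.single, h1, h2]
  simp only [hterm]
  simp [Matrix.one_apply, Finset.sum_ite_eq]

lemma exists_mem_KrausSet {D d : ℕ} (hd : 0 < d) : (KrausSet D d).Nonempty := by
  classical
  set L : Fin D → Matrix (Fin d) (Fin D) ℂ :=
    fun a => Matrix.single ⟨0, hd⟩ a 1 with hL
  have hTP : ∑ j, (L j)ᴴ * L j = 1 := by
    have h1 : ∀ a, (L a)ᴴ * L a = Matrix.single a a (1 : ℂ) := by
      intro a
      ext b c
      have hterm : ∀ k : Fin d, star (L a k b) * L a k c
          = if (⟨0, hd⟩ : Fin d) = k then (if a = b ∧ a = c then (1:ℂ) else 0) else 0 := by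
        intro k
        by_cases h1 : (⟨0, hd⟩ : Fin d) = k <;> by_cases h2 : a = b <;>
          by_cases h3 : a = c <;>
          simp [hL, Matrix.single, h1, h2, h3]
      rw [Matrix.mul_apply]
      simp only [Matrix.conjTranspose_apply, hterm]
      simp [Matrix.single, Finset.sum_ite_eq, ite_and]
    simp only [h1]
    exact sum_diag_stdBasis D
  obtain ⟨K, hK, _⟩ := channel_reduce L hTP
  exact ⟨K, hK⟩

lemma krausSet_entry_bound {D d : ℕ} {K : Fin (d * D) → Matrix (Fin d) (Fin D) ℂ}
    (hK : K ∈ KrausSet D d) (j : Fin (d * D)) (k : Fin d) (a : Fin D) :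
    ‖K j k a‖ ≤ 1 := by
  have h := congrFun (congrFun hK a) a
  have h2 : ∑ j, ∑ k, Complex.normSq (K j k a) = 1 := by
    have h3 : ∑ j : Fin (d * D), ((K j)ᴴ * K j) a a
        = ∑ j, ∑ k, (Complex.normSq (K j k a) : ℂ) := by
      refine Finset.sum_congr rfl fun j _ => ?_
      rw [Matrix.mul_apply]
      refine Finset.sum_congr rfl fun k _ => ?_
      rw [Matrix.conjTranspose_apply, Complex.star_def, Complex.normSq_eq_conj_mul_self]
    have h5 : (∑ j : Fin (d * D), ((K j)ᴴ * K j)) a a = (1 : Matrix (Fin D) (Fin D) ℂ) a a := h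
    rw [Matrix.sum_apply] at h5
    rw [h3, Matrix.one_apply_eq] at h5
    exact_mod_cast h5
  have h7 : Complex.normSq (K j k a) ≤ 1 := by
    rw [← h2]
    have : ∑ k', Complex.normSq (K j k' a)
        ≤ ∑ j', ∑ k', Complex.normSq (K j' k' a) :=
      Finset.single_le_sum (f := fun j' => ∑ k', Complex.normSq (K j' k' a))
        (fun _ _ => Finset.sum_nonneg fun _ _ => Complex.normSq_nonneg _) (Finset.mem_univ j)
    have h8 : Complex.normSq (K j k a) ≤ ∑ k', Complex.normSq (K j k' a) :=
      Finset.single_le_sum (f := fun k' => Complex.normSq (K j k' a))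
        (fun _ _ => Complex.normSq_nonneg _) (Finset.mem_univ k)
    linarith
  have h9 : Complex.normSq (K j k a) = ‖K j k a‖ ^ 2 := by
    rw [Complex.normSq_eq_norm_sq]
  nlinarith [norm_nonneg (K j k a)]

lemma krausSet_isCompact {D d : ℕ} : IsCompact (KrausSet D d) := by
  classical
  have hcomp : IsCompact (Set.pi Set.univ (fun _ : Fin (d * D) =>
      Set.pi Set.univ (fun _ : Fin d => Set.pi Set.univ
        (fun _ : Fin D => Metric.closedBall (0 : ℂ) 1)))) :=
    isCompact_univ_pi fun _ => isCompact_univ_pi fun _ => isCompact_univ_pi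
      fun _ => isCompact_closedBall 0 1
  have hclosed : IsClosed (KrausSet D d) := by
    have : Continuous fun K : Fin (d * D) → Matrix (Fin d) (Fin D) ℂ =>
        ∑ j, (K j)ᴴ * K j :=
      continuous_finset_sum _ fun j _ =>
        ((continuous_apply j).matrix_conjTranspose).matrix_mul (continuous_apply j)
    exact isClosed_eq this continuous_const
  refine hcomp.of_isClosed_subset hclosed ?_
  intro K hK
  intro j _
  intro k _
  intro a _
  simpa [Metric.mem_closedBall, dist_eq_norm] using krausSet_entry_bound hK j k a

end Compactness


section Attain

variable {D d r : ℕ}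

lemma exists_max_kraus (hd : 0 < d)
    (M : Fin r → Matrix (Fin d) (Fin d) ℂ) (hM : IsPOVM M)
    (Mpert : ℝ → Fin r → Matrix (Fin d) (Fin d) ℂ)
    (hMpert : ∀ ε i, Mpert ε i = ((1 - ε : ℝ) : ℂ) • M i +
      (((ε : ℝ) : ℂ) * (M i).trace / (d : ℂ)) • (1 : Matrix (Fin d) (Fin d) ℂ))
    (ρ₀ ρ' : Matrix (Fin D) (Fin D) ℂ) (hρ₀psd : ρ₀.PosSemidef) (hρ₀tr : ρ₀.trace = 1)
    {ε : ℝ} (hε0 : 0 < ε) (hε1 : ε ≤ 1) :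
    ∃ K ∈ KrausSet D d, ∀ K' ∈ KrausSet D d,
      FisherInfo (Emap K' ρ₀) (Emap K' ρ') (Mpert ε)
        ≤ FisherInfo (Emap K ρ₀) (Emap K ρ') (Mpert ε) := by
  classical
  have hEcont : ∀ σ : Matrix (Fin D) (Fin D) ℂ,
      Continuous fun K : Fin (d * D) → Matrix (Fin d) (Fin D) ℂ => Emap K σ := fun σ =>
    continuous_finset_sum _ fun j _ =>
      ((continuous_apply j).matrix_mul continuous_const).matrix_mul
        ((continuous_apply j).matrix_conjTranspose)
  have hcont : ContinuousOn
      (fun K : Fin (d * D) → Matrix (Fin d) (Fin D) ℂ =>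
        FisherInfo (Emap K ρ₀) (Emap K ρ') (Mpert ε)) (KrausSet D d) := by
    unfold FisherInfo
    apply continuousOn_finset_sum
    intro i _
    by_cases hti : (M i).trace = 0
    · have hMi : M i = 0 := psd_eq_zero_of_trace_eq_zero (hM.1 i) hti
      have hMp : Mpert ε i = 0 := by
        rw [hMpert, hMi]
        simp
      simp only [hMp, Matrix.mul_zero, Matrix.trace_zero, if_pos rfl]
      exact continuousOn_const
    · have hτpos : 0 < (M i).trace.re := by
        have h1 := complex_nonneg_re (psd_trace_nonneg (hM.1 i))
        rcases lt_or_eq_of_le h1.2 with h' | h'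
        · exact h'
        · exact absurd (by rw [h1.1, ← h']; simp) hti
      have hden_eq : ∀ K ∈ KrausSet D d,
          ((Emap K ρ₀) * Mpert ε i).trace
            = (((1 - ε) * ((Emap K ρ₀ * M i).trace.re)
                + ε * ((M i).trace.re / d) : ℝ) : ℂ) := by
        intro K hK
        exact pert_trace_den M Mpert hMpert (Emap K ρ₀)
          (by rw [Emap_trace K hK, hρ₀tr])
          (fun i' => psd_trace_mul_nonneg (Emap_psd K hρ₀psd) (hM.1 i'))
          (fun i' => psd_trace_nonneg (hM.1 i')) ε i
      have hdenpos : ∀ K ∈ KrausSet D d,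
          0 < (1 - ε) * ((Emap K ρ₀ * M i).trace.re) + ε * ((M i).trace.re / d) := by
        intro K hK
        have hp := (complex_nonneg_re
          (psd_trace_mul_nonneg (Emap_psd K hρ₀psd) (hM.1 i))).2
        have h1 : 0 ≤ (1 - ε) * ((Emap K ρ₀ * M i).trace.re) := by nlinarith
        have h2 : 0 < ε * ((M i).trace.re / d) := by
          apply mul_pos hε0
          apply div_pos hτpos
          exact_mod_cast hd
        linarith
      refine ContinuousOn.congr (f := fun K =>
        ((Emap K ρ') * Mpert ε i).trace.re ^ 2 / ((Emap K ρ₀) * Mpert ε i).trace.re) ?_ ?_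
      · apply ContinuousOn.div
        · exact (Continuous.continuousOn (by
            exact (Complex.continuous_re.comp
              (((hEcont ρ').matrix_mul continuous_const).matrix_trace)).pow 2))
        · exact (Continuous.continuousOn
            (Complex.continuous_re.comp (((hEcont ρ₀).matrix_mul continuous_const).matrix_trace)))
        · intro K hK
          rw [hden_eq K hK]
          simpa using (hdenpos K hK).ne'
      · intro K hK
        have hne : ((Emap K ρ₀) * Mpert ε i).trace ≠ 0 := by
          rw [hden_eq K hK]
          exact_mod_cast (hdenpos K hK).ne'
        simp only [if_neg hne]
  obtain ⟨K, hK, hmax⟩ := krausSet_isCompact.exists_isMaxOn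
    (exists_mem_KrausSet hd) hcont
  exact ⟨K, hK, fun K' hK' => hmax hK'⟩

end Attain

/-- the QPFI of the depolarized measurements `M^{(ε)}` tends to the QPFI of `M`
as `ε → 0⁺`, and for each `ε ∈ (0,1]` the supremum defining the QPFI of `M^{(ε)}` is
attained by some quantum channel. -/
theorem stmt2 {D d r : ℕ} (hD : 1 ≤ D) (hd : 1 ≤ d) (hr : 1 ≤ r)
    (ρ : ℝ → Matrix (Fin D) (Fin D) ℂ) (ρ' : Matrix (Fin D) (Fin D) ℂ) (θ₀ : ℝ)
    (hdens : ∀ θ, IsDensityMatrix (ρ θ))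
    (hder : ∀ i j, HasDerivAt (fun θ => ρ θ i j) (ρ' i j) θ₀)
    (M : Fin r → Matrix (Fin d) (Fin d) ℂ) (hM : IsPOVM M)
    (hfin : BddAbove {x : ℝ | ∃ E : Matrix (Fin D) (Fin D) ℂ → Matrix (Fin d) (Fin d) ℂ,
      IsQuantumChannel E ∧ x = FisherInfo (E (ρ θ₀)) (E ρ') M})
    (Mpert : ℝ → Fin r → Matrix (Fin d) (Fin d) ℂ)
    (hMpert : ∀ ε i, Mpert ε i = ((1 - ε : ℝ) : ℂ) • M i +
      (((ε : ℝ) : ℂ) * (M i).trace / (d : ℂ)) • (1 : Matrix (Fin d) (Fin d) ℂ)) :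
    Filter.Tendsto (fun ε : ℝ => QPFI (ρ θ₀) ρ' (Mpert ε))
      (nhdsWithin 0 (Set.Ioi 0)) (nhds (QPFI (ρ θ₀) ρ' M))
    ∧ ∀ ε ∈ Set.Ioc (0 : ℝ) 1,
      ∃ E : Matrix (Fin D) (Fin D) ℂ → Matrix (Fin d) (Fin d) ℂ,
        IsQuantumChannel E ∧
        FisherInfo (E (ρ θ₀)) (E ρ') (Mpert ε) = QPFI (ρ θ₀) ρ' (Mpert ε) := by
  classical
  have hd0 : 0 < d := hd
  set ρ₀ := ρ θ₀ with hρ₀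
  have hρ₀psd : ρ₀.PosSemidef := (hdens θ₀).1
  have hρ₀tr : ρ₀.trace = 1 := (hdens θ₀).2
  have htr' : ρ'.trace = 0 := trace_deriv_zero (fun θ => (hdens θ).2) hder
  have ht : ∀ i, 0 ≤ (M i).trace := fun i => psd_trace_nonneg (hM.1 i)
  -- the hypothesis bundle for an arbitrary channel in Kraus form
  have hbund : ∀ (κ : ℕ) (K : Fin κ → Matrix (Fin d) (Fin D) ℂ),
      (∑ j, (K j)ᴴ * K j = 1) →
      ((Emap K ρ₀).trace = 1 ∧ (Emap K ρ').trace = 0 ∧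
        (∀ i, 0 ≤ (Emap K ρ₀ * M i).trace) ∧
        (∀ i, (Emap K ρ₀ * M i).trace = 0 → (Emap K ρ' * M i).trace.re = 0)) := by
    intro κ K hTP
    refine ⟨by rw [Emap_trace K hTP, hρ₀tr], by rw [Emap_trace K hTP, htr'],
      fun i => psd_trace_mul_nonneg (Emap_psd K hρ₀psd) (hM.1 i), fun i hi => ?_⟩
    exact re_trace_Emap_deriv_zero K (hM.1 i) (fun θ => (hdens θ).1) hder hi
  -- a concrete channel (to witness nonemptiness)
  obtain ⟨K₀, hK₀⟩ := exists_mem_KrausSet (D := D) hd0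
  have hE₀ : IsQuantumChannel (fun σ => Emap K₀ σ) := ⟨d * D, K₀, hK₀, fun _ => rfl⟩
  set S := QPFI ρ₀ ρ' M with hS
  have hneM : {x : ℝ | ∃ E : Matrix (Fin D) (Fin D) ℂ → Matrix (Fin d) (Fin d) ℂ,
      IsQuantumChannel E ∧ x = FisherInfo (E ρ₀) (E ρ') M}.Nonempty :=
    ⟨_, ⟨fun σ => Emap K₀ σ, hE₀, rfl⟩⟩
  -- every element of the perturbed set is ≤ S, for ε ∈ (0,1)
  have hub : ∀ ε : ℝ, 0 < ε → ε < 1 → ∀ x ∈ {x : ℝ | ∃ E : Matrix (Fin D) (Fin D) ℂ →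
      Matrix (Fin d) (Fin d) ℂ, IsQuantumChannel E ∧
      x = FisherInfo (E ρ₀) (E ρ') (Mpert ε)}, x ≤ S := by
    rintro ε hε0 hε1 x ⟨E, hE, rfl⟩
    obtain ⟨κ, K, hTP, hEeq⟩ := hE
    obtain ⟨h1, h2, h3, h4⟩ := hbund κ K hTP
    have hEe : ∀ σ, E σ = Emap K σ := fun σ => hEeq σ
    rw [hEe ρ₀, hEe ρ']
    calc FisherInfo (Emap K ρ₀) (Emap K ρ') (Mpert ε)
        ≤ FisherInfo (Emap K ρ₀) (Emap K ρ') M :=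
          fisher_pert_le M Mpert hMpert (Emap K ρ₀) (Emap K ρ') h1 h2 h3 ht h4 hε0 hε1
      _ ≤ S := le_csSup hfin ⟨fun σ => Emap K σ, ⟨κ, K, hTP, fun _ => rfl⟩, rfl⟩
  have hne : ∀ ε : ℝ, {x : ℝ | ∃ E : Matrix (Fin D) (Fin D) ℂ →
      Matrix (Fin d) (Fin d) ℂ, IsQuantumChannel E ∧
      x = FisherInfo (E ρ₀) (E ρ') (Mpert ε)}.Nonempty :=
    fun ε => ⟨_, ⟨fun σ => Emap K₀ σ, hE₀, rfl⟩⟩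
  constructor
  · -- the limit statement
    rw [Metric.tendsto_nhds]
    intro δ hδ
    have hlt : S - δ / 2 < S := by linarith
    obtain ⟨x, hxmem, hx⟩ := exists_lt_of_lt_csSup hneM hlt
    obtain ⟨E, hE, rfl⟩ := hxmem
    obtain ⟨κ, K, hTP, hEeq⟩ := hE
    obtain ⟨h1, h2, h3, h4⟩ := hbund κ K hTP
    have hEe : ∀ σ, E σ = Emap K σ := fun σ => hEeq σ
    rw [hEe ρ₀, hEe ρ'] at hx
    have htend := fisher_pert_tendsto M Mpert hMpert (Emap K ρ₀) (Emap K ρ')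
      h1 h2 h3 ht h4
    have hev1 : ∀ᶠ ε in nhdsWithin (0:ℝ) (Set.Ioi 0),
        S - δ < FisherInfo (Emap K ρ₀) (Emap K ρ') (Mpert ε) :=
      htend.eventually (eventually_gt_nhds (by linarith))
    have hev2 : ∀ᶠ ε in nhdsWithin (0:ℝ) (Set.Ioi 0), ε ∈ Set.Ioo (0:ℝ) 1 :=
      Ioo_mem_nhdsGT_of_mem (by norm_num : (0:ℝ) ∈ Set.Ico 0 1)
    filter_upwards [hev1, hev2] with ε hε1 hε2
    have hbdd : BddAbove {x : ℝ | ∃ E : Matrix (Fin D) (Fin D) ℂ →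
        Matrix (Fin d) (Fin d) ℂ, IsQuantumChannel E ∧
        x = FisherInfo (E ρ₀) (E ρ') (Mpert ε)} :=
      ⟨S, hub ε hε2.1 hε2.2⟩
    have hle : QPFI ρ₀ ρ' (Mpert ε) ≤ S := csSup_le (hne ε) (hub ε hε2.1 hε2.2)
    have hge : FisherInfo (Emap K ρ₀) (Emap K ρ') (Mpert ε) ≤ QPFI ρ₀ ρ' (Mpert ε) :=
      le_csSup hbdd ⟨fun σ => Emap K σ, ⟨κ, K, hTP, fun _ => rfl⟩, rfl⟩
    rw [Real.dist_eq, abs_lt]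
    constructor <;> [linarith; linarith]
  · -- attainment
    rintro ε ⟨hε0, hε1⟩
    obtain ⟨K, hK, hmax⟩ := exists_max_kraus hd0 M hM Mpert hMpert ρ₀ ρ' hρ₀psd hρ₀tr hε0 hε1
    refine ⟨fun σ => Emap K σ, ⟨d * D, K, hK, fun _ => rfl⟩, ?_⟩
    have hub2 : ∀ x ∈ {x : ℝ | ∃ E : Matrix (Fin D) (Fin D) ℂ →
        Matrix (Fin d) (Fin d) ℂ, IsQuantumChannel E ∧
        x = FisherInfo (E ρ₀) (E ρ') (Mpert ε)},
        x ≤ FisherInfo (Emap K ρ₀) (Emap K ρ') (Mpert ε) := by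
      rintro x ⟨E, hE, rfl⟩
      obtain ⟨κ, L, hTP, hEeq⟩ := hE
      obtain ⟨K', hK'TP, hKeq⟩ := channel_reduce L hTP
      have hEe : ∀ σ, E σ = Emap K' σ := fun σ => by
        rw [hEeq σ]; exact (hKeq σ).symm
      rw [hEe ρ₀, hEe ρ']
      exact hmax K' hK'TP
    exact le_antisymm
      (le_csSup ⟨_, hub2⟩ ⟨fun σ => Emap K σ, ⟨d * D, K, hK, fun _ => rfl⟩, rfl⟩)
      (csSup_le (hne ε) hub2)
end
end

section
/- Fix integers d ≥ 2 and r ≥ 1, a differentiable pure-state family ψ at θ₀ on ℂ^d and a POVM M on ℂ^d with r outcomes. Then F^U(ρ₀, ρ₀', M) = γ(M) · 4𝔫; that is, the unitary-preprocessing-optimized Fisher information of any pure-state family factorizes as the normalized QPFI of the measurement times the quantum Fisher information 4𝔫 of the pure-state family. -/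
open scoped Matrix Kronecker ComplexOrder
open Classical

noncomputable section

set_option linter.unusedSectionVars false
variable {n : Type*} [Fintype n] [DecidableEq n]

namespace QHelp

lemma cInner_add_right (x y z : n → ℂ) : cInner x (y + z) = cInner x y + cInner x z := by
  simp [cInner, mul_add, Finset.sum_add_distrib]

lemma cInner_sub_right (x y z : n → ℂ) : cInner x (y - z) = cInner x y - cInner x z := by
  simp [cInner, mul_sub, Finset.sum_sub_distrib]

lemma cInner_smul_right (c : ℂ) (x y : n → ℂ) : cInner x (c • y) = c * cInner x y := by
  simp [cInner, Finset.mul_sum]; ring_nf; simp [mul_comm, mul_left_comm]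

lemma cInner_smul_left (c : ℂ) (x y : n → ℂ) :
    cInner (c • x) y = (starRingEnd ℂ) c * cInner x y := by
  simp [cInner, Finset.mul_sum, mul_assoc]

lemma star_cInner (x y : n → ℂ) : (starRingEnd ℂ) (cInner x y) = cInner y x := by
  simp [cInner, map_sum, mul_comm]

lemma cInner_conjTranspose (A : Matrix n n ℂ) (x y : n → ℂ) :
    cInner (A *ᵥ x) y = cInner x (Aᴴ *ᵥ y) := by
  simp only [cInner, Matrix.mulVec, dotProduct, Matrix.conjTranspose_apply,
    Finset.mul_sum, Finset.sum_mul, map_sum, map_mul]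
  rw [Finset.sum_comm]
  refine Finset.sum_congr rfl fun j _ => ?_
  simp only [star_sum, star_mul', Finset.sum_mul]
  exact Finset.sum_congr rfl fun k _ => by ring

lemma trace_vecMulVec_mul (x y : n → ℂ) (M : Matrix n n ℂ) :
    (Matrix.vecMulVec x (star y) * M).trace = cInner y (M *ᵥ x) := by
  simp only [Matrix.trace, Matrix.diag, Matrix.mul_apply, Matrix.vecMulVec_apply, cInner,
    Matrix.mulVec, dotProduct, Pi.star_apply, Finset.mul_sum]
  rw [Finset.sum_comm]
  refine Finset.sum_congr rfl fun j _ => Finset.sum_congr rfl fun k _ => by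
    simp [RCLike.star_def]; ring


lemma cInner_eq_inner (x y : n → ℂ) :
    cInner x y = @inner ℂ (EuclideanSpace ℂ n) _ (WithLp.toLp 2 x) (WithLp.toLp 2 y) := by
  simp [cInner, PiLp.inner_apply, RCLike.inner_apply, RCLike.star_def, mul_comm]

lemma cInner_self_re_nonneg (x : n → ℂ) : 0 ≤ (cInner x x).re := by
  simp only [cInner]
  rw [Complex.re_sum]
  exact Finset.sum_nonneg fun k _ => by
    simpa [Complex.normSq_apply] using Complex.normSq_nonneg (x k)

lemma cInner_re_eq_sum_normSq (x : n → ℂ) :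
    (cInner x x).re = ∑ k, Complex.normSq (x k) := by
  simp [cInner, Complex.re_sum, Complex.normSq_apply, Complex.mul_re, RCLike.star_def]

lemma cInner_self_eq_zero {x : n → ℂ} (h : (cInner x x).re = 0) : x = 0 := by
  rw [cInner_re_eq_sum_normSq] at h
  have := (Finset.sum_eq_zero_iff_of_nonneg
    (fun k _ => Complex.normSq_nonneg (x k))).mp h
  funext k
  simpa using Complex.normSq_eq_zero.mp (this k (Finset.mem_univ k))

lemma cInner_unitary {U : Matrix n n ℂ} (hU : Uᴴ * U = 1) (x y : n → ℂ) :
    cInner (U *ᵥ x) (U *ᵥ y) = cInner x y := by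
  rw [cInner_conjTranspose, Matrix.mulVec_mulVec, hU, Matrix.one_mulVec]

lemma unitary_conj_vecMulVec (U : Matrix n n ℂ) (x y : n → ℂ) :
    U * Matrix.vecMulVec x (star y) * Uᴴ
      = Matrix.vecMulVec (U *ᵥ x) (star (U *ᵥ y)) := by
  ext a b
  simp only [Matrix.mul_apply, Matrix.vecMulVec_apply, Matrix.conjTranspose_apply,
    Matrix.mulVec, dotProduct, Pi.star_apply, star_sum, star_mul',
    Finset.sum_mul, Finset.mul_sum]
  refine Finset.sum_congr rfl fun k _ => Finset.sum_congr rfl fun j _ => by ring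

lemma psd_cInner_re {M : Matrix n n ℂ} (hM : M.PosSemidef) (x : n → ℂ) :
    cInner x (M *ᵥ x) = ((cInner x (M *ᵥ x)).re : ℂ) ∧ 0 ≤ (cInner x (M *ᵥ x)).re := by
  have h := hM.dotProduct_mulVec_nonneg x
  have hd : dotProduct (star x) (M *ᵥ x) = cInner x (M *ᵥ x) := by
    simp [dotProduct, cInner]
  rw [hd] at h
  rw [Complex.le_def] at h
  obtain ⟨h1, h2⟩ := h
  constructor
  · exact Complex.ext rfl (by simpa using h2.symm)
  · simpa using h1

lemma psd_cauchy_schwarz {M : Matrix n n ℂ} (hM : M.PosSemidef) (a b : n → ℂ) :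
    ((cInner a (M *ᵥ b)).re) ^ 2 ≤ (cInner a (M *ᵥ a)).re * (cInner b (M *ᵥ b)).re := by
  have hA : ∀ x y z : n → ℂ, cInner (x + y) z = cInner x z + cInner y z := by
    intro x y z; simp [cInner, add_mul, Finset.sum_add_distrib]
  have hsym : (cInner b (M *ᵥ a)).re = (cInner a (M *ᵥ b)).re := by
    rw [← star_cInner, cInner_conjTranspose, hM.1.eq, Complex.conj_re]
  have hq : ∀ t : ℝ, 0 ≤ (cInner b (M *ᵥ b)).re * (t * t)
      + 2 * (cInner a (M *ᵥ b)).re * t + (cInner a (M *ᵥ a)).re := by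
    intro t
    have h := (psd_cInner_re hM (a + (t : ℂ) • b)).2
    rw [Matrix.mulVec_add, Matrix.mulVec_smul, hA, cInner_smul_left, cInner_add_right,
      cInner_add_right, cInner_smul_right, cInner_smul_right] at h
    simp only [Complex.add_re, Complex.mul_re, Complex.conj_re, Complex.conj_im,
      Complex.ofReal_re, Complex.ofReal_im, zero_mul, sub_zero, neg_zero] at h
    rw [hsym] at h
    nlinarith [h]
  have := discrim_le_zero hq
  unfold discrim at this
  nlinarith [this]


lemma exists_unitary_map {d : ℕ} (hd : 2 ≤ d) (a b c e : Fin d → ℂ)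
    (ha : cInner a a = 1) (hb : cInner b b = 1) (hab : cInner a b = 0)
    (hc : cInner c c = 1) (he : cInner e e = 1) (hce : cInner c e = 0) :
    ∃ U : Matrix (Fin d) (Fin d) ℂ, U ∈ Matrix.unitaryGroup (Fin d) ℂ ∧
      U *ᵥ a = c ∧ U *ᵥ b = e := by
  obtain ⟨d', rfl⟩ : ∃ d', d = d' + 2 := ⟨d - 2, by omega⟩
  have h01 : (0 : Fin (d' + 2)) ≠ 1 := by simp [Fin.ext_iff]
  -- build orthonormal bases extending the pairs
  have key : ∀ x y : Fin (d'+2) → ℂ, cInner x x = 1 → cInner y y = 1 → cInner x y = 0 →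
      ∃ B : OrthonormalBasis (Fin (d'+2)) ℂ (EuclideanSpace ℂ (Fin (d'+2))), B 0 = WithLp.toLp 2 x ∧ B 1 = WithLp.toLp 2 y := by
    intro x y hx hy hxy
    set v : Fin (d'+2) → EuclideanSpace ℂ (Fin (d'+2)) :=
      fun i => if i = 0 then WithLp.toLp 2 x else if i = 1 then WithLp.toLp 2 y else 0 with hv
    have hyx : cInner y x = 0 := by rw [← star_cInner, hxy]; simp
    have horth : Orthonormal ℂ (({0, 1} : Set (Fin (d'+2))).restrict v) := by
      rw [orthonormal_iff_ite]
      rintro ⟨i, hi⟩ ⟨j, hj⟩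
      simp only [Set.mem_insert_iff, Set.mem_singleton_iff] at hi hj
      rcases hi with rfl | rfl <;> rcases hj with rfl | rfl <;>
        simp only [Set.restrict_apply, hv, if_pos rfl, if_neg h01, if_neg h01.symm,
          ← cInner_eq_inner, Subtype.mk.injEq] <;>
        simp [Set.restrict, ← cInner_eq_inner, -inner_self_eq_norm_sq_to_K, hx, hy, hxy, hyx, h01, h01.symm]
    obtain ⟨B, hB⟩ := horth.exists_orthonormalBasis_extension_of_card_eq
      (by simp [finrank_euclideanSpace])
    refine ⟨B, ?_, ?_⟩
    · have := hB 0 (by simp)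
      simpa [hv] using this
    · have := hB 1 (by simp)
      simpa [hv, h01.symm] using this
  obtain ⟨B₁, hB₁0, hB₁1⟩ := key a b ha hb hab
  obtain ⟨B₂, hB₂0, hB₂1⟩ := key c e hc he hce
  set f := B₁.repr.trans B₂.repr.symm with hf
  have hfB : ∀ i, f (B₁ i) = B₂ i := by
    intro i
    simp [hf, B₁.repr_self, B₂.repr_symm_single]
  set U : Matrix (Fin (d'+2)) (Fin (d'+2)) ℂ :=
    Matrix.of (fun i j => f (EuclideanSpace.single j 1) i) with hU
  have hUapp : ∀ x : Fin (d'+2) → ℂ, U *ᵥ x = (f (WithLp.toLp 2 x)).ofLp := by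
    intro x
    have hxdecomp : (WithLp.toLp 2 x : EuclideanSpace ℂ (Fin (d'+2)))
        = ∑ j, x j • EuclideanSpace.single j (1 : ℂ) := by
      ext i
      rw [WithLp.ofLp_sum, Fintype.sum_apply]
      simp only [PiLp.smul_apply, EuclideanSpace.single_apply, smul_eq_mul]
      simp [Finset.sum_ite_eq', mul_comm]
    funext i
    rw [Matrix.mulVec, dotProduct]
    conv_rhs => rw [hxdecomp]
    rw [map_sum]
    simp only [map_smul]
    rw [WithLp.ofLp_sum, Finset.sum_apply]
    refine Finset.sum_congr rfl fun j _ => ?_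
    simp [hU, mul_comm]
  have hUnit : U ∈ Matrix.unitaryGroup (Fin (d'+2)) ℂ := by
    rw [Matrix.mem_unitaryGroup_iff', Matrix.star_eq_conjTranspose]
    ext i j
    simp only [Matrix.mul_apply, Matrix.conjTranspose_apply]
    have : ∀ k, U k i = f (EuclideanSpace.single i 1) k := fun k => rfl
    have hcalc : ∑ k, star (U k i) * U k j
        = cInner (f (EuclideanSpace.single i 1)).ofLp (f (EuclideanSpace.single j 1)).ofLp := rfl
    rw [hcalc, cInner_eq_inner, WithLp.toLp_ofLp, WithLp.toLp_ofLp]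
    rw [f.inner_map_map]
    rw [EuclideanSpace.inner_single_left]
    simp [EuclideanSpace.single_apply, Matrix.one_apply, eq_comm]
  refine ⟨U, hUnit, ?_, ?_⟩
  · rw [hUapp, ← hB₁0, hfB 0, hB₂0]
  · rw [hUapp, ← hB₁1, hfB 1, hB₂1]


lemma cInner_sub_left (x y z : n → ℂ) : cInner (x - y) z = cInner x z - cInner y z := by
  simp [cInner, sub_mul, Finset.sum_sub_distrib]

lemma cInner_sum_right {r : ℕ} (x : n → ℂ) (f : Fin r → n → ℂ) :
    cInner x (∑ i, f i) = ∑ i, cInner x (f i) := by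
  simp only [cInner, Finset.sum_apply, Finset.mul_sum]
  rw [Finset.sum_comm]

lemma cInner_zero_right (x : n → ℂ) : cInner x 0 = 0 := by simp [cInner]

/-- Hermitian quadratic form is real. -/
lemma herm_cInner_real {M : Matrix n n ℂ} (hM : M.IsHermitian) (x : n → ℂ) :
    (cInner x (M *ᵥ x)).im = 0 := by
  have h : (starRingEnd ℂ) (cInner x (M *ᵥ x)) = cInner x (M *ᵥ x) := by
    rw [star_cInner, cInner_conjTranspose, hM.eq]
  have := congrArg Complex.im h
  simp only [Complex.conj_im] at this
  linarith

/-- The intermediate functional. -/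
def G {r : ℕ} (M : Fin r → Matrix n n ℂ) (φ w : n → ℂ) : ℝ :=
  ∑ i, if cInner φ (M i *ᵥ φ) = 0 then 0
    else 4 * ((cInner φ (M i *ᵥ w)).re) ^ 2 / ((cInner φ (M i *ᵥ φ)).re)

lemma G_smul {r : ℕ} (M : Fin r → Matrix n n ℂ) (φ φp : n → ℂ) (t : ℝ) :
    G M φ (((t : ℂ)) • φp) = (4 * t ^ 2) * gammaSummand M φ φp := by
  unfold G gammaSummand
  rw [Finset.mul_sum]
  refine Finset.sum_congr rfl fun i _ => ?_
  by_cases h : cInner φ (M i *ᵥ φ) = 0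
  · simp [h]
  · rw [if_neg h, if_neg h, Matrix.mulVec_smul, cInner_smul_right]
    have hre : ((t : ℂ) * cInner φ (M i *ᵥ φp)).re = t * (cInner φ (M i *ᵥ φp)).re := by
      simp [Complex.mul_re]
    rw [hre, mul_pow]
    ring

lemma G_zero {r : ℕ} (M : Fin r → Matrix n n ℂ) (φ : n → ℂ) : G M φ 0 = 0 := by
  unfold G
  refine Finset.sum_eq_zero fun i _ => ?_
  rw [Matrix.mulVec_zero, cInner_zero_right]
  simp

lemma fisher_eq_G {r : ℕ} (M : Fin r → Matrix n n ℂ)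
    (hMh : ∀ i, (M i).IsHermitian)
    (ψ₀ ψd v : n → ℂ) (α : ℂ) (hα : α.re = 0) (hv : ψd = v + α • ψ₀)
    (U : Matrix n n ℂ) :
    FisherInfo (U * Matrix.vecMulVec ψ₀ (star ψ₀) * Uᴴ)
      (U * (Matrix.vecMulVec ψd (star ψ₀) + Matrix.vecMulVec ψ₀ (star ψd)) * Uᴴ) M
      = G M (U *ᵥ ψ₀) (U *ᵥ v) := by
  set φ := U *ᵥ ψ₀ with hφ
  set w := U *ᵥ v with hw
  set φd := U *ᵥ ψd with hφd
  have hρ : U * Matrix.vecMulVec ψ₀ (star ψ₀) * Uᴴ = Matrix.vecMulVec φ (star φ) :=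
    unitary_conj_vecMulVec U ψ₀ ψ₀
  have hρ' : U * (Matrix.vecMulVec ψd (star ψ₀) + Matrix.vecMulVec ψ₀ (star ψd)) * Uᴴ
      = Matrix.vecMulVec φd (star φ) + Matrix.vecMulVec φ (star φd) := by
    rw [Matrix.mul_add, Matrix.add_mul, unitary_conj_vecMulVec, unitary_conj_vecMulVec]
  unfold FisherInfo G
  refine Finset.sum_congr rfl fun i _ => ?_
  rw [hρ, hρ', trace_vecMulVec_mul]
  by_cases h : cInner φ (M i *ᵥ φ) = 0
  · rw [if_pos h, if_pos h]
  · rw [if_neg h, if_neg h]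
    have htr : ((Matrix.vecMulVec φd (star φ) + Matrix.vecMulVec φ (star φd)) * M i).trace
        = cInner φ (M i *ᵥ φd) + cInner φd (M i *ᵥ φ) := by
      rw [Matrix.add_mul, Matrix.trace_add, trace_vecMulVec_mul, trace_vecMulVec_mul]
    have hconj : cInner φd (M i *ᵥ φ) = (starRingEnd ℂ) (cInner φ (M i *ᵥ φd)) := by
      have h2 : cInner (M i *ᵥ φd) φ = cInner φd ((M i)ᴴ *ᵥ φ) :=
        cInner_conjTranspose _ _ _
      rw [star_cInner, h2, (hMh i).eq]
    have hφdw : φd = w + α • φ := by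
      rw [hφd, hv, Matrix.mulVec_add, Matrix.mulVec_smul]
    have hz : (cInner φ (M i *ᵥ φd)).re = (cInner φ (M i *ᵥ w)).re := by
      rw [hφdw, Matrix.mulVec_add, cInner_add_right, Matrix.mulVec_smul, cInner_smul_right]
      have him := herm_cInner_real (hMh i) φ
      simp [Complex.add_re, Complex.mul_re, hα, him]
    rw [htr, hconj]
    have hre2 : (cInner φ (M i *ᵥ φd) + (starRingEnd ℂ) (cInner φ (M i *ᵥ φd))).re
        = 2 * (cInner φ (M i *ᵥ w)).re := by
      rw [Complex.add_re, Complex.conj_re, hz]; ring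
    rw [hre2]
    ring

lemma re_cInner_deriv {d : ℕ} (ψ : ℝ → Fin d → ℂ) (ψ' : Fin d → ℂ) (θ₀ : ℝ)
    (hnorm : ∀ θ, cInner (ψ θ) (ψ θ) = 1)
    (hder : ∀ k, HasDerivAt (fun θ => ψ θ k) (ψ' k) θ₀) :
    (cInner (ψ θ₀) ψ').re = 0 := by
  have hterm : ∀ k : Fin d, HasDerivAt (fun θ => star (ψ θ k) * ψ θ k)
      (star (ψ' k) * ψ θ₀ k + star (ψ θ₀ k) * ψ' k) θ₀ :=
    fun k => ((hder k).star).mul (hder k)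
  have h1 : HasDerivAt (fun θ => cInner (ψ θ) (ψ θ))
      (∑ k, (star (ψ' k) * ψ θ₀ k + star (ψ θ₀ k) * ψ' k)) θ₀ := by
    unfold cInner
    exact HasDerivAt.fun_sum fun k _ => hterm k
  have h2 : HasDerivAt (fun θ => cInner (ψ θ) (ψ θ)) 0 θ₀ := by
    have he : (fun θ => cInner (ψ θ) (ψ θ)) = fun _ => (1 : ℂ) := funext hnorm
    rw [he]; exact hasDerivAt_const _ _
  have h3 := h1.unique h2
  have h4 : cInner ψ' (ψ θ₀) + cInner (ψ θ₀) ψ' = 0 := by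
    rw [← h3, cInner, cInner, ← Finset.sum_add_distrib]
  rw [← star_cInner] at h4
  have h5 := congrArg Complex.re h4
  simp only [Complex.add_re, Complex.conj_re, Complex.zero_re] at h5
  linarith

lemma mul_csSup {c : ℝ} (hc : 0 < c) {S : Set ℝ} (hne : S.Nonempty) (hbdd : BddAbove S) :
    sSup ((fun x => c * x) '' S) = c * sSup S := by
  obtain ⟨B, hB⟩ := hbdd
  apply le_antisymm
  · apply csSup_le (hne.image _)
    rintro _ ⟨x, hx, rfl⟩
    exact mul_le_mul_of_nonneg_left (le_csSup ⟨B, hB⟩ hx) hc.le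
  · rw [mul_comm, ← le_div_iff₀ hc]
    apply csSup_le hne
    intro x hx
    rw [le_div_iff₀ hc, mul_comm]
    apply le_csSup
    · refine ⟨c * B, ?_⟩
      rintro _ ⟨y, hy, rfl⟩
      exact mul_le_mul_of_nonneg_left (hB hy) hc.le
    · exact ⟨x, hx, rfl⟩


lemma sum_mulVec' {r : ℕ} (M : Fin r → Matrix n n ℂ) (v : n → ℂ) :
    (∑ i, M i) *ᵥ v = ∑ i, M i *ᵥ v := by
  funext k
  simp only [Matrix.mulVec, dotProduct, Finset.sum_apply, Finset.sum_mul,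
    Matrix.sum_apply]
  rw [Finset.sum_comm]

lemma gammaSummand_le_one {r : ℕ} {M : Fin r → Matrix n n ℂ} (hM : IsPOVM M)
    (φ φp : n → ℂ) (hφp : cInner φp φp = 1) : gammaSummand M φ φp ≤ 1 := by
  have hb : ∀ i, 0 ≤ (cInner φp (M i *ᵥ φp)).re := fun i => (psd_cInner_re (hM.1 i) φp).2
  have step : gammaSummand M φ φp ≤ ∑ i, (cInner φp (M i *ᵥ φp)).re := by
    unfold gammaSummand
    refine Finset.sum_le_sum fun i _ => ?_
    by_cases h : cInner φ (M i *ᵥ φ) = 0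
    · rw [if_pos h]; exact hb i
    · rw [if_neg h]
      obtain ⟨hTre, hTnn⟩ := psd_cInner_re (hM.1 i) φ
      have hTpos : 0 < (cInner φ (M i *ᵥ φ)).re := by
        rcases lt_or_eq_of_le hTnn with h' | h'
        · exact h'
        · exfalso; apply h; rw [hTre, ← h']; simp
      rw [div_le_iff₀ hTpos]
      have := psd_cauchy_schwarz (hM.1 i) φ φp
      linarith [this]
  have hsum : ∑ i, (cInner φp (M i *ᵥ φp)).re = 1 := by
    have h1 : ∑ i, cInner φp (M i *ᵥ φp) = cInner φp φp := by
      rw [← cInner_sum_right, ← sum_mulVec', hM.2, Matrix.one_mulVec]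
    rw [← Complex.re_sum, h1, hφp]
    simp
  linarith

lemma gamma_set_props {d r : ℕ} (hd : 2 ≤ d) {M : Fin r → Matrix (Fin d) (Fin d) ℂ}
    (hM : IsPOVM M) :
    ({x : ℝ | ∃ φ φp : Fin d → ℂ,
        cInner φ φ = 1 ∧ cInner φp φp = 1 ∧ cInner φ φp = 0 ∧
          x = gammaSummand M φ φp}).Nonempty ∧
    BddAbove {x : ℝ | ∃ φ φp : Fin d → ℂ,
        cInner φ φ = 1 ∧ cInner φp φp = 1 ∧ cInner φ φp = 0 ∧
          x = gammaSummand M φ φp} := by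
  constructor
  · set i0 : Fin d := ⟨0, by omega⟩
    set i1 : Fin d := ⟨1, by omega⟩
    have hne : i0 ≠ i1 := by simp [i0, i1, Fin.ext_iff]
    refine ⟨gammaSummand M (Pi.single i0 1) (Pi.single i1 1),
      Pi.single i0 1, Pi.single i1 1, ?_, ?_, ?_, rfl⟩
    · simp [cInner, Pi.single_apply, apply_ite, Finset.sum_ite_eq']
    · simp [cInner, Pi.single_apply, apply_ite, Finset.sum_ite_eq']
    · simp [cInner, Pi.single_apply, apply_ite, Finset.sum_ite_eq', hne, hne.symm]
  · refine ⟨1, ?_⟩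
    rintro x ⟨φ, φp, _, hφp, _, rfl⟩
    exact gammaSummand_le_one hM φ φp hφp

end QHelp

open QHelp in
/-- for a pure-state family, the unitary-preprocessing-optimized Fisher
information factorizes as the normalized QPFI of the measurement times the quantum Fisher
information `4𝔫` of the pure state. -/
theorem stmt6 {d r : ℕ} (hd : 2 ≤ d) (hr : 1 ≤ r)
    (ψ : ℝ → Fin d → ℂ) (ψ' : Fin d → ℂ) (θ₀ : ℝ)
    (hnorm : ∀ θ, cInner (ψ θ) (ψ θ) = 1)
    (hder : ∀ k, HasDerivAt (fun θ => ψ θ k) (ψ' k) θ₀)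
    (M : Fin r → Matrix (Fin d) (Fin d) ℂ) (hM : IsPOVM M)
    (nf : ℝ) (hnf : nf = (cInner ψ' (ψ' - cInner (ψ θ₀) ψ' • ψ θ₀)).re) :
    QUPFI (Matrix.vecMulVec (ψ θ₀) (star (ψ θ₀)))
        (Matrix.vecMulVec ψ' (star (ψ θ₀)) + Matrix.vecMulVec (ψ θ₀) (star ψ')) M
      = gammaPOVM M * (4 * nf) := by
  have hMh : ∀ i, (M i).IsHermitian := fun i => (hM.1 i).1
  set ψ₀ := ψ θ₀ with hψ₀def
  set α := cInner ψ₀ ψ' with hαdef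
  set v : Fin d → ℂ := ψ' - α • ψ₀ with hvdef
  have hα : α.re = 0 := re_cInner_deriv ψ ψ' θ₀ hnorm hder
  have hunit : cInner ψ₀ ψ₀ = 1 := hnorm θ₀
  have hψdecomp : ψ' = v + α • ψ₀ := by rw [hvdef]; abel
  have hov : cInner ψ₀ v = 0 := by
    rw [hvdef, cInner_sub_right, cInner_smul_right, hunit, mul_one, ← hαdef, sub_self]
  have h1 : cInner v v = cInner ψ' v := by
    have h1' := cInner_sub_left ψ' (α • ψ₀) v
    rw [← hvdef, cInner_smul_left, hov, mul_zero, sub_zero] at h1'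
    exact h1'
  have himz : (cInner v v).im = 0 := by
    have h := congrArg Complex.im (star_cInner v v)
    simp only [Complex.conj_im] at h
    linarith
  have hvv : cInner v v = (nf : ℂ) := by
    have : cInner v v = ((cInner v v).re : ℂ) := Complex.ext rfl (by simp [himz])
    rw [this, h1, ← hnf]
  have hnf_nonneg : 0 ≤ nf := by
    have := cInner_self_re_nonneg v
    rw [hvv] at this
    simpa using this
  obtain ⟨hγne, hγbdd⟩ := gamma_set_props hd hM
  rcases eq_or_lt_of_le hnf_nonneg with hz | hpos
  · -- nf = 0
    have hv0 : v = 0 := cInner_self_eq_zero (by rw [hvv, ← hz]; simp)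
    have hall : ∀ U : Matrix (Fin d) (Fin d) ℂ,
        FisherInfo (U * Matrix.vecMulVec ψ₀ (star ψ₀) * Uᴴ)
          (U * (Matrix.vecMulVec ψ' (star ψ₀) + Matrix.vecMulVec ψ₀ (star ψ')) * Uᴴ) M
          = 0 := by
      intro U
      rw [fisher_eq_G M hMh ψ₀ ψ' v α hα hψdecomp U, hv0, Matrix.mulVec_zero, G_zero]
    unfold QUPFI
    have hset : {x : ℝ | ∃ U : Matrix (Fin d) (Fin d) ℂ, U ∈ Matrix.unitaryGroup (Fin d) ℂ ∧
        x = FisherInfo (U * Matrix.vecMulVec ψ₀ (star ψ₀) * Uᴴ)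
          (U * (Matrix.vecMulVec ψ' (star ψ₀) + Matrix.vecMulVec ψ₀ (star ψ')) * Uᴴ) M}
        = {0} := by
      ext x
      simp only [Set.mem_setOf_eq, Set.mem_singleton_iff]
      constructor
      · rintro ⟨U, hU, rfl⟩; exact hall U
      · rintro rfl; exact ⟨1, one_mem _, (hall 1).symm⟩
    rw [hset, csSup_singleton, ← hz]
    ring
  · -- 0 < nf
    set t := Real.sqrt nf with htdef
    have ht2 : t ^ 2 = nf := Real.sq_sqrt hnf_nonneg
    have ht0 : 0 < t := Real.sqrt_pos.mpr hpos
    have htC : ((t : ℝ) : ℂ) * ((t⁻¹ : ℝ) : ℂ) = 1 := by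
      rw [← Complex.ofReal_mul, mul_inv_cancel₀ ht0.ne', Complex.ofReal_one]
    have hinv1 : ((t⁻¹ : ℝ) : ℂ) * (((t⁻¹ : ℝ) : ℂ) * (nf : ℂ)) = 1 := by
      rw [← Complex.ofReal_mul, ← Complex.ofReal_mul]
      norm_cast
      rw [← ht2]
      field_simp
    have hseteq : {x : ℝ | ∃ U : Matrix (Fin d) (Fin d) ℂ, U ∈ Matrix.unitaryGroup (Fin d) ℂ ∧
        x = FisherInfo (U * Matrix.vecMulVec ψ₀ (star ψ₀) * Uᴴ)
          (U * (Matrix.vecMulVec ψ' (star ψ₀) + Matrix.vecMulVec ψ₀ (star ψ')) * Uᴴ) M}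
        = (fun g => (4 * nf) * g) '' {x : ℝ | ∃ φ φp : Fin d → ℂ,
            cInner φ φ = 1 ∧ cInner φp φp = 1 ∧ cInner φ φp = 0 ∧
              x = gammaSummand M φ φp} := by
      ext x
      simp only [Set.mem_setOf_eq, Set.mem_image]
      constructor
      · rintro ⟨U, hUmem, rfl⟩
        have hU' : Uᴴ * U = 1 := by
          rw [← Matrix.star_eq_conjTranspose]
          exact Matrix.mem_unitaryGroup_iff'.mp hUmem
        set φp : Fin d → ℂ := ((t⁻¹ : ℝ) : ℂ) • (U *ᵥ v) with hφpdef
        have hw : U *ᵥ v = ((t : ℝ) : ℂ) • φp := by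
          rw [hφpdef, smul_smul, htC, one_smul]
        have hφφ : cInner (U *ᵥ ψ₀) (U *ᵥ ψ₀) = 1 := by rw [cInner_unitary hU', hunit]
        have hww : cInner (U *ᵥ v) (U *ᵥ v) = (nf : ℂ) := by rw [cInner_unitary hU', hvv]
        have hφw : cInner (U *ᵥ ψ₀) (U *ᵥ v) = 0 := by rw [cInner_unitary hU', hov]
        have hφpφp : cInner φp φp = 1 := by
          rw [hφpdef, cInner_smul_left, cInner_smul_right, hww, Complex.conj_ofReal]
          exact hinv1
        have hφφp : cInner (U *ᵥ ψ₀) φp = 0 := by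
          rw [hφpdef, cInner_smul_right, hφw, mul_zero]
        refine ⟨gammaSummand M (U *ᵥ ψ₀) φp, ⟨U *ᵥ ψ₀, φp, hφφ, hφpφp, hφφp, rfl⟩, ?_⟩
        rw [fisher_eq_G M hMh ψ₀ ψ' v α hα hψdecomp U, hw, G_smul, ht2]
      · rintro ⟨g, ⟨φ, φp, hφφ, hφpφp, hφφp, rfl⟩, rfl⟩
        set vh : Fin d → ℂ := ((t⁻¹ : ℝ) : ℂ) • v with hvhdef
        have hvvh : v = ((t : ℝ) : ℂ) • vh := by
          rw [hvhdef, smul_smul, htC, one_smul]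
        have hvhvh : cInner vh vh = 1 := by
          rw [hvhdef, cInner_smul_left, cInner_smul_right, hvv, Complex.conj_ofReal]
          exact hinv1
        have hovh : cInner ψ₀ vh = 0 := by
          rw [hvhdef, cInner_smul_right, hov, mul_zero]
        obtain ⟨U, hUmem, hUa, hUb⟩ :=
          exists_unitary_map hd ψ₀ vh φ φp hunit hvhvh hovh hφφ hφpφp hφφp
        refine ⟨U, hUmem, ?_⟩
        have hUv : U *ᵥ v = ((t : ℝ) : ℂ) • φp := by
          conv_lhs => rw [hvvh]
          rw [Matrix.mulVec_smul, hUb]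
        rw [fisher_eq_G M hMh ψ₀ ψ' v α hα hψdecomp U, hUa, hUv, G_smul, ht2]
    unfold QUPFI gammaPOVM
    rw [hseteq, mul_csSup (by positivity) hγne hγbdd]
    ring
end
end

section
/- Let 0 < m₂ < m₁ < 1 and consider the two-outcome POVM on ℂ² with M₁ = diag(m₁, m₂) and M₂ = 1 − M₁. Then γ({M₁, M₂}) = 1 − (√(m₁m₂) + √((1−m₁)(1−m₂)))². Moreover, the supremum defining γ is attained at the orthonormal pair φ* = (√p*, √(1−p*)), φ⊥* = (√(1−p*), −√p*), where p* = √(m₂(1−m₂)) / (√(m₁(1−m₁)) + √(m₂(1−m₂))). -/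
open scoped Matrix Kronecker ComplexOrder
open Classical

noncomputable section

/-!
For an orthonormal pair `φ, ψ` put `x = |φ₀|²` and `a = m₁ x + m₂ (1 - x) = ⟨φ, M₁ φ⟩`.
Orthogonality gives `⟨φ, M₁ ψ⟩ = -⟨φ, M₂ ψ⟩ = (m₁ - m₂) φ₀* ψ₀` and `|φ₀* ψ₀|² = x (1 - x)`, so
the functional is at most `(m₁ - m₂)² x (1 - x) / (a (1 - a))`, with equality when `φ₀* ψ₀` is real.
Writing `C = √(m₁(1-m₂))`, `E = √(m₂(1-m₁))`, `α = √(m₁(1-m₁))`, `β = √(m₂(1-m₂))`, one has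
`1 - F² = (C - E)²` for the fidelity `F` of the Bernoulli laws, `m₁ - m₂ = C² - E²`, `CE = αβ`,
and Lagrange's identity gives `a (1 - a) = (xα + (1-x)β)² + x(1-x)(C - E)²`. Hence
`(1 - F²) a (1 - a) - (m₁ - m₂)² x (1 - x) = (C - E)² (xα - (1-x)β)²`, an AM-GM gap that vanishes
exactly at `x = p*`.
-/

def bernoulliFidelity (m₁ m₂ : ℝ) : ℝ := √(m₁ * m₂) + √((1 - m₁) * (1 - m₂))

section BernoulliFidelity

variable {m₁ m₂ : ℝ}

lemma sqrt_mul_one_sub_mul_sqrt_mul_one_sub (h₁ : 0 ≤ m₁) (h₁' : m₁ ≤ 1) (h₂ : 0 ≤ m₂)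
    (h₂' : m₂ ≤ 1) :
    √(m₁ * (1 - m₂)) * √(m₂ * (1 - m₁)) = √(m₁ * m₂) * √((1 - m₁) * (1 - m₂)) ∧
    √(m₁ * (1 - m₂)) * √(m₂ * (1 - m₁)) = √(m₁ * (1 - m₁)) * √(m₂ * (1 - m₂)) := by
  simp only [← Real.sqrt_mul (mul_nonneg h₁ (sub_nonneg.2 h₂')), ← Real.sqrt_mul (mul_nonneg h₁ h₂),
    ← Real.sqrt_mul (mul_nonneg h₁ (sub_nonneg.2 h₁'))]
  constructor <;> ring_nf

lemma one_sub_bernoulliFidelity_sq (h₁ : 0 ≤ m₁) (h₁' : m₁ ≤ 1) (h₂ : 0 ≤ m₂) (h₂' : m₂ ≤ 1) :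
    1 - bernoulliFidelity m₁ m₂ ^ 2 = (√(m₁ * (1 - m₂)) - √(m₂ * (1 - m₁))) ^ 2 := by
  rw [bernoulliFidelity]
  linear_combination -Real.sq_sqrt (mul_nonneg h₁ h₂)
    - Real.sq_sqrt (mul_nonneg (sub_nonneg.2 h₁') (sub_nonneg.2 h₂'))
    - Real.sq_sqrt (mul_nonneg h₁ (sub_nonneg.2 h₂'))
    - Real.sq_sqrt (mul_nonneg h₂ (sub_nonneg.2 h₁'))
    + 2 * (sqrt_mul_one_sub_mul_sqrt_mul_one_sub h₁ h₁' h₂ h₂').1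

lemma one_sub_bernoulliFidelity_sq_mul_sub (h₁ : 0 ≤ m₁) (h₁' : m₁ ≤ 1) (h₂ : 0 ≤ m₂)
    (h₂' : m₂ ≤ 1) (x : ℝ) :
    (1 - bernoulliFidelity m₁ m₂ ^ 2) * ((m₁ * x + m₂ * (1 - x)) * (1 - (m₁ * x + m₂ * (1 - x))))
      - (m₁ - m₂) ^ 2 * (x * (1 - x))
    = (√(m₁ * (1 - m₂)) - √(m₂ * (1 - m₁))) ^ 2
      * (x * √(m₁ * (1 - m₁)) - (1 - x) * √(m₂ * (1 - m₂))) ^ 2 := by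
  rw [one_sub_bernoulliFidelity_sq h₁ h₁' h₂ h₂']
  set C := √(m₁ * (1 - m₂))
  set E := √(m₂ * (1 - m₁))
  have hC : C ^ 2 = m₁ * (1 - m₂) := Real.sq_sqrt (by nlinarith)
  have hE : E ^ 2 = m₂ * (1 - m₁) := Real.sq_sqrt (by nlinarith)
  have hα : √(m₁ * (1 - m₁)) ^ 2 = m₁ * (1 - m₁) := Real.sq_sqrt (by nlinarith)
  have hβ : √(m₂ * (1 - m₂)) ^ 2 = m₂ * (1 - m₂) := Real.sq_sqrt (by nlinarith)
  linear_combination -(C - E) ^ 2 * x ^ 2 * hα - (C - E) ^ 2 * (1 - x) ^ 2 * hβ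
    + x * (1 - x) * (-(C - E) ^ 2 + (C ^ 2 - E ^ 2 + m₁ - m₂)) * hC
    + x * (1 - x) * (-(C - E) ^ 2 - (C ^ 2 - E ^ 2 + m₁ - m₂)) * hE
    - 2 * (C - E) ^ 2 * x * (1 - x) * (sqrt_mul_one_sub_mul_sqrt_mul_one_sub h₁ h₁' h₂ h₂').2

lemma sq_sub_mul_le_one_sub_bernoulliFidelity_sq_mul (h₁ : 0 ≤ m₁) (h₁' : m₁ ≤ 1) (h₂ : 0 ≤ m₂)
    (h₂' : m₂ ≤ 1) (x : ℝ) :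
    (m₁ - m₂) ^ 2 * (x * (1 - x))
      ≤ (1 - bernoulliFidelity m₁ m₂ ^ 2)
        * ((m₁ * x + m₂ * (1 - x)) * (1 - (m₁ * x + m₂ * (1 - x)))) := by
  rw [← sub_nonneg, one_sub_bernoulliFidelity_sq_mul_sub h₁ h₁' h₂ h₂']
  positivity

lemma sq_sub_mul_eq_one_sub_bernoulliFidelity_sq_mul (h₁ : 0 ≤ m₁) (h₁' : m₁ ≤ 1) (h₂ : 0 ≤ m₂)
    (h₂' : m₂ ≤ 1) {x : ℝ} (hx : x * √(m₁ * (1 - m₁)) = (1 - x) * √(m₂ * (1 - m₂))) :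
    (m₁ - m₂) ^ 2 * (x * (1 - x))
      = (1 - bernoulliFidelity m₁ m₂ ^ 2)
        * ((m₁ * x + m₂ * (1 - x)) * (1 - (m₁ * x + m₂ * (1 - x)))) := by
  rw [eq_comm, ← sub_eq_zero, one_sub_bernoulliFidelity_sq_mul_sub h₁ h₁' h₂ h₂', hx, sub_self]
  ring

lemma mul_add_mul_one_sub_mem_Ioo (h₁ : 0 < m₁) (h₁' : m₁ < 1) (h₂ : 0 < m₂) (h₂' : m₂ < 1)
    {x : ℝ} (hx : 0 ≤ x) (hx' : x ≤ 1) : m₁ * x + m₂ * (1 - x) ∈ Set.Ioo 0 1 := by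
  simpa [smul_eq_mul, mul_comm] using
    convex_Ioo (0 : ℝ) 1 ⟨h₁, h₁'⟩ ⟨h₂, h₂'⟩ hx (sub_nonneg.2 hx') (add_sub_cancel x 1)

end BernoulliFidelity

lemma Complex.star_mul_self (z : ℂ) : star z * z = (Complex.normSq z : ℂ) :=
  Complex.normSq_eq_conj_mul_self.symm

lemma cInner_fin_two (φ ψ : Fin 2 → ℂ) : cInner φ ψ = star (φ 0) * ψ 0 + star (φ 1) * ψ 1 := by
  simp [cInner, Fin.sum_univ_two]

lemma cInner_diagonal_mulVec {n : Type*} [Fintype n] [DecidableEq n] (d φ ψ : n → ℂ) :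
    cInner φ (Matrix.diagonal d *ᵥ ψ) = ∑ k, d k * (star (φ k) * ψ k) := by
  simp only [cInner, Matrix.mulVec_diagonal]
  exact Finset.sum_congr rfl fun _ _ ↦ by ring

lemma cInner_one_sub_mulVec {n : Type*} [Fintype n] [DecidableEq n] (A : Matrix n n ℂ)
    (φ ψ : n → ℂ) : cInner φ ((1 - A) *ᵥ ψ) = cInner φ ψ - cInner φ (A *ᵥ ψ) := by
  simp only [cInner, Matrix.sub_mulVec, Matrix.one_mulVec, Pi.sub_apply, mul_sub,
    Finset.sum_sub_distrib]

lemma normSq_add_normSq_of_cInner_self {φ : Fin 2 → ℂ} (hφ : cInner φ φ = 1) :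
    Complex.normSq (φ 0) + Complex.normSq (φ 1) = 1 := by
  rw [cInner_fin_two, Complex.star_mul_self, Complex.star_mul_self] at hφ
  exact_mod_cast hφ

lemma re_star_mul_sq_le {φ ψ : Fin 2 → ℂ} (hφ : cInner φ φ = 1) (hψ : cInner ψ ψ = 1)
    (hφψ : cInner φ ψ = 0) :
    (star (φ 0) * ψ 0).re ^ 2 ≤ Complex.normSq (φ 0) * (1 - Complex.normSq (φ 0)) := by
  have hφ' := normSq_add_normSq_of_cInner_self hφ
  have h₀ : Complex.normSq (star (φ 0) * ψ 0) = Complex.normSq (φ 0) * Complex.normSq (ψ 0) := by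
    rw [Complex.normSq_mul, Complex.star_def, Complex.normSq_conj]
  have h₁ : Complex.normSq (star (φ 0) * ψ 0) = Complex.normSq (φ 1) * Complex.normSq (ψ 1) := by
    rw [cInner_fin_two, add_eq_zero_iff_eq_neg] at hφψ
    rw [hφψ, Complex.normSq_neg, Complex.normSq_mul, Complex.star_def, Complex.normSq_conj]
  -- with `x + y = u + v = 1`, `t = x u = y v` forces `t = (x + y) t = x y (u + v) = x y`
  have ht : Complex.normSq (star (φ 0) * ψ 0) = Complex.normSq (φ 0) * Complex.normSq (φ 1) := by
    linear_combination Complex.normSq (φ 1) * h₀ + Complex.normSq (φ 0) * h₁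
      - Complex.normSq (star (φ 0) * ψ 0) * hφ'
      + Complex.normSq (φ 0) * Complex.normSq (φ 1) * normSq_add_normSq_of_cInner_self hψ
  rw [sq, ← eq_sub_of_add_eq' hφ', ← ht]
  exact Complex.re_sq_le_normSq _

lemma sq_sqrt_add_sq_sqrt_one_sub {p : ℝ} (hp : 0 ≤ p) (hp' : p ≤ 1) :
    √p ^ 2 + √(1 - p) ^ 2 = 1 := by
  rw [Real.sq_sqrt hp, Real.sq_sqrt (sub_nonneg.2 hp')]
  ring

lemma cInner_rotation {s c : ℝ} (h : s ^ 2 + c ^ 2 = 1) :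
    cInner ![(s : ℂ), (c : ℂ)] ![(s : ℂ), (c : ℂ)] = 1 ∧
    cInner ![(c : ℂ), (-s : ℂ)] ![(c : ℂ), (-s : ℂ)] = 1 ∧
    cInner ![(s : ℂ), (c : ℂ)] ![(c : ℂ), (-s : ℂ)] = 0 := by
  simp only [cInner_fin_two, Matrix.cons_val_zero, Matrix.cons_val_one, Complex.star_def,
    Complex.conj_ofReal, map_neg]
  have hℂ : (s : ℂ) ^ 2 + (c : ℂ) ^ 2 = 1 := by exact_mod_cast h
  exact ⟨by linear_combination hℂ, by linear_combination hℂ, by ring⟩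

section BinaryPOVM

variable {m₁ m₂ : ℝ} {M : Fin 2 → Matrix (Fin 2) (Fin 2) ℂ}

lemma gammaSummand_binary_eq (hM0 : M 0 = Matrix.diagonal ![(m₁ : ℂ), (m₂ : ℂ)])
    (hM1 : M 1 = 1 - M 0) (h₁ : 0 < m₁) (h₁' : m₁ < 1) (h₂ : 0 < m₂) (h₂' : m₂ < 1)
    {φ ψ : Fin 2 → ℂ} (hφ : cInner φ φ = 1) (hφψ : cInner φ ψ = 0) :
    gammaSummand M φ ψ
      = (m₁ - m₂) ^ 2 * (star (φ 0) * ψ 0).re ^ 2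
        / ((m₁ * Complex.normSq (φ 0) + m₂ * (1 - Complex.normSq (φ 0)))
          * (1 - (m₁ * Complex.normSq (φ 0) + m₂ * (1 - Complex.normSq (φ 0))))) := by
  have hφ' := normSq_add_normSq_of_cInner_self hφ
  obtain ⟨ha, ha'⟩ := mul_add_mul_one_sub_mem_Ioo h₁ h₁' h₂ h₂' (Complex.normSq_nonneg (φ 0))
    (by linarith [Complex.normSq_nonneg (φ 1)])
  set a := m₁ * Complex.normSq (φ 0) + m₂ * (1 - Complex.normSq (φ 0))
  have hM0φ : cInner φ (M 0 *ᵥ φ) = (a : ℂ) := by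
    rw [hM0, cInner_diagonal_mulVec, Fin.sum_univ_two, Complex.star_mul_self,
      Complex.star_mul_self, eq_sub_of_add_eq' hφ']
    simp [a]
  have hM1φ : cInner φ (M 1 *ᵥ φ) = ((1 - a : ℝ) : ℂ) := by
    rw [hM1, cInner_one_sub_mulVec, hφ, hM0φ, Complex.ofReal_sub, Complex.ofReal_one]
  have hM0ψ : cInner φ (M 0 *ᵥ ψ) = ((m₁ - m₂ : ℝ) : ℂ) * (star (φ 0) * ψ 0) := by
    rw [cInner_fin_two] at hφψ
    rw [hM0, cInner_diagonal_mulVec, Fin.sum_univ_two]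
    simp only [Matrix.cons_val_zero, Matrix.cons_val_one, Complex.ofReal_sub]
    linear_combination (m₂ : ℂ) * hφψ
  have hM1ψ : cInner φ (M 1 *ᵥ ψ) = -(((m₁ - m₂ : ℝ) : ℂ) * (star (φ 0) * ψ 0)) := by
    rw [hM1, cInner_one_sub_mulVec, hφψ, hM0ψ, zero_sub]
  rw [gammaSummand, Fin.sum_univ_two, hM0φ, hM1φ, hM0ψ, hM1ψ,
    if_neg (by exact_mod_cast ha.ne'), if_neg (by exact_mod_cast (sub_pos.2 ha').ne')]
  simp only [Complex.ofReal_re, Complex.re_ofReal_mul, Complex.neg_re, neg_sq]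
  field_simp [ha.ne', (sub_pos.2 ha').ne']
  ring

lemma gammaSummand_binary_le (hM0 : M 0 = Matrix.diagonal ![(m₁ : ℂ), (m₂ : ℂ)])
    (hM1 : M 1 = 1 - M 0) (h₁ : 0 < m₁) (h₁' : m₁ < 1) (h₂ : 0 < m₂) (h₂' : m₂ < 1)
    {φ ψ : Fin 2 → ℂ} (hφ : cInner φ φ = 1) (hψ : cInner ψ ψ = 1) (hφψ : cInner φ ψ = 0) :
    gammaSummand M φ ψ ≤ 1 - bernoulliFidelity m₁ m₂ ^ 2 := by
  set x := Complex.normSq (φ 0)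
  obtain ⟨ha, ha'⟩ := mul_add_mul_one_sub_mem_Ioo h₁ h₁' h₂ h₂' (Complex.normSq_nonneg (φ 0))
    (by linarith [normSq_add_normSq_of_cInner_self hφ, Complex.normSq_nonneg (φ 1)])
  rw [gammaSummand_binary_eq hM0 hM1 h₁ h₁' h₂ h₂' hφ hφψ,
    div_le_iff₀ (mul_pos ha (sub_pos.2 ha'))]
  calc (m₁ - m₂) ^ 2 * (star (φ 0) * ψ 0).re ^ 2
      ≤ (m₁ - m₂) ^ 2 * (x * (1 - x)) := by gcongr; exact re_star_mul_sq_le hφ hψ hφψ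
    _ ≤ _ := sq_sub_mul_le_one_sub_bernoulliFidelity_sq_mul h₁.le h₁'.le h₂.le h₂'.le x

lemma gammaSummand_binary_rotation_eq (hM0 : M 0 = Matrix.diagonal ![(m₁ : ℂ), (m₂ : ℂ)])
    (hM1 : M 1 = 1 - M 0) (h₁ : 0 < m₁) (h₁' : m₁ < 1) (h₂ : 0 < m₂) (h₂' : m₂ < 1)
    {p : ℝ} (hp : 0 ≤ p) (hp' : p ≤ 1)
    (hpx : p * √(m₁ * (1 - m₁)) = (1 - p) * √(m₂ * (1 - m₂))) :
    gammaSummand M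
        ![((Real.sqrt p : ℝ) : ℂ), ((Real.sqrt (1 - p) : ℝ) : ℂ)]
        ![((Real.sqrt (1 - p) : ℝ) : ℂ), (-(Real.sqrt p : ℝ) : ℂ)]
      = 1 - bernoulliFidelity m₁ m₂ ^ 2 := by
  obtain ⟨hφ, -, hφψ⟩ := cInner_rotation (sq_sqrt_add_sq_sqrt_one_sub hp hp')
  have hs := Real.sq_sqrt hp
  have hc := Real.sq_sqrt (sub_nonneg.2 hp')
  obtain ⟨ha, ha'⟩ := mul_add_mul_one_sub_mem_Ioo h₁ h₁' h₂ h₂' hp hp'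
  rw [gammaSummand_binary_eq hM0 hM1 h₁ h₁' h₂ h₂' hφ hφψ]
  simp only [Matrix.cons_val_zero, Complex.normSq_ofReal, Complex.star_def, Complex.conj_ofReal,
    ← Complex.ofReal_mul, Complex.ofReal_re, ← sq, hs]
  rw [div_eq_iff (mul_pos ha (sub_pos.2 ha')).ne', mul_pow, hs, hc]
  exact sq_sub_mul_eq_one_sub_bernoulliFidelity_sq_mul h₁.le h₁'.le h₂.le h₂'.le hpx

end BinaryPOVM

/-- the normalized QPFI of the binary qubit measurement
`M₁ = diag(m₁, m₂)`, `M₂ = 1 − M₁` (with `0 < m₂ < m₁ < 1`), and its attainment at the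
explicit optimal orthonormal pair. -/
theorem stmt7 (m₁ m₂ : ℝ) (h₂ : 0 < m₂) (h₁₂ : m₂ < m₁) (h₁ : m₁ < 1)
    (M : Fin 2 → Matrix (Fin 2) (Fin 2) ℂ)
    (hM0 : M 0 = Matrix.diagonal ![(m₁ : ℂ), (m₂ : ℂ)])
    (hM1 : M 1 = 1 - M 0)
    (p : ℝ)
    (hp : p = Real.sqrt (m₂ * (1 - m₂)) /
      (Real.sqrt (m₁ * (1 - m₁)) + Real.sqrt (m₂ * (1 - m₂)))) :
    gammaPOVM M
      = 1 - (Real.sqrt (m₁ * m₂) + Real.sqrt ((1 - m₁) * (1 - m₂))) ^ 2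
    ∧ gammaSummand M
        ![((Real.sqrt p : ℝ) : ℂ), ((Real.sqrt (1 - p) : ℝ) : ℂ)]
        ![((Real.sqrt (1 - p) : ℝ) : ℂ), (-(Real.sqrt p : ℝ) : ℂ)]
      = gammaPOVM M := by
  have h₁₀ : 0 < m₁ := h₂.trans h₁₂
  have h₂₁ : m₂ < 1 := h₁₂.trans h₁
  have hα : 0 < √(m₁ * (1 - m₁)) := Real.sqrt_pos.2 (mul_pos h₁₀ (sub_pos.2 h₁))
  have hβ : 0 < √(m₂ * (1 - m₂)) := Real.sqrt_pos.2 (mul_pos h₂ (sub_pos.2 h₂₁))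
  have hp₀ : 0 ≤ p := hp ▸ by positivity
  have hp₁ : p ≤ 1 := hp ▸ (div_le_one (by positivity)).2 (by linarith)
  have hpx : p * √(m₁ * (1 - m₁)) = (1 - p) * √(m₂ * (1 - m₂)) := by
    rw [hp]; field_simp; ring
  have hattain := gammaSummand_binary_rotation_eq hM0 hM1 h₁₀ h₁ h₂ h₂₁ hp₀ hp₁ hpx
  have hγ : gammaPOVM M = 1 - bernoulliFidelity m₁ m₂ ^ 2 := by
    refine IsGreatest.csSup_eq ⟨?_, ?_⟩
    · obtain ⟨hφ, hψ, hφψ⟩ := cInner_rotation (sq_sqrt_add_sq_sqrt_one_sub hp₀ hp₁)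
      exact ⟨_, _, hφ, hψ, hφψ, hattain.symm⟩
    · rintro _ ⟨φ, ψ, hφ, hψ, hφψ, rfl⟩
      exact gammaSummand_binary_le hM0 hM1 h₁₀ h₁ h₂ h₂₁ hφ hψ hφψ
  exact ⟨hγ, hattain.trans hγ.symm⟩
end
end

section
/- Let d ≥ 2 and m₁, …, m_d ∈ (0,1) with m₁ ≥ m₂ ≥ … ≥ m_d and m₁ > m_d, and consider the two-outcome POVM on ℂ^d with M₁ = diag(m₁, …, m_d) and M₂ = 1 − M₁. Then γ({M₁, M₂}) = 1 − (√(m₁m_d) + √((1−m₁)(1−m_d)))². -/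
open scoped Matrix Kronecker ComplexOrder
open Classical

noncomputable section

lemma cInner_self' {n : Type*} [Fintype n] (φ : n → ℂ) :
    cInner φ φ = ((∑ k, Complex.normSq (φ k) : ℝ) : ℂ) := by
  unfold cInner
  push_cast
  refine Finset.sum_congr rfl fun k _ => ?_
  rw [Complex.star_def, ← Complex.normSq_eq_conj_mul_self]

lemma gamma_eval' {d : ℕ} (m : Fin d → ℝ) (q p : ℝ) (hq : 0 < q) (hp : p < 1)
    (hlb : ∀ j, q ≤ m j) (hub : ∀ j, m j ≤ p)
    (M : Fin 2 → Matrix (Fin d) (Fin d) ℂ)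
    (hM0 : M 0 = Matrix.diagonal fun j => ((m j : ℝ) : ℂ))
    (hM1 : M 1 = 1 - M 0)
    (φ φp : Fin d → ℂ) (hφ : cInner φ φ = 1) (horth : cInner φ φp = 0) :
    q ≤ ∑ j, m j * Complex.normSq (φ j) ∧
    (∑ j, m j * Complex.normSq (φ j)) ≤ p ∧
    gammaSummand M φ φp =
      (∑ j, m j * (star (φ j) * φp j).re)^2 / (∑ j, m j * Complex.normSq (φ j)) +
      (∑ j, m j * (star (φ j) * φp j).re)^2 / (1 - ∑ j, m j * Complex.normSq (φ j)) := by
  set a : ℝ := ∑ j, m j * Complex.normSq (φ j) with ha_def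
  set t : ℝ := ∑ j, m j * (star (φ j) * φp j).re with ht_def
  have hsum1 : ∑ j, Complex.normSq (φ j) = 1 := by
    have := (cInner_self' φ).symm.trans hφ
    exact_mod_cast this
  have haq : q ≤ a := by
    calc q = ∑ j, q * Complex.normSq (φ j) := by rw [← Finset.mul_sum, hsum1, mul_one]
    _ ≤ a := Finset.sum_le_sum fun j _ =>
        mul_le_mul_of_nonneg_right (hlb j) (Complex.normSq_nonneg _)
  have hap : a ≤ p := by
    calc a ≤ ∑ j, p * Complex.normSq (φ j) := Finset.sum_le_sum fun j _ =>
        mul_le_mul_of_nonneg_right (hub j) (Complex.normSq_nonneg _)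
    _ = p := by rw [← Finset.mul_sum, hsum1, mul_one]
  have ha0 : (0:ℝ) < a := lt_of_lt_of_le hq haq
  have ha1 : a < 1 := lt_of_le_of_lt hap hp
  have hI0 : cInner φ (M 0 *ᵥ φ) = (a : ℂ) := by
    rw [hM0]
    unfold cInner
    rw [ha_def]
    push_cast
    refine Finset.sum_congr rfl fun k _ => ?_
    rw [Matrix.mulVec_diagonal, Complex.star_def]
    rw [show (starRingEnd ℂ) (φ k) * ((m k : ℂ) * φ k)
        = (m k : ℂ) * ((starRingEnd ℂ) (φ k) * φ k) by ring]
    rw [← Complex.normSq_eq_conj_mul_self]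
  have hT0 : (cInner φ (M 0 *ᵥ φp)).re = t := by
    rw [hM0]
    unfold cInner
    rw [ht_def, Complex.re_sum]
    refine Finset.sum_congr rfl fun k _ => ?_
    rw [Matrix.mulVec_diagonal]
    rw [show star (φ k) * ((m k : ℂ) * φp k) = (m k : ℂ) * (star (φ k) * φp k) by ring]
    rw [Complex.re_ofReal_mul]
  have hsub : ∀ ψ : Fin d → ℂ, cInner φ (M 1 *ᵥ ψ) = cInner φ ψ - cInner φ (M 0 *ᵥ ψ) := by
    intro ψ
    rw [hM1, Matrix.sub_mulVec, Matrix.one_mulVec]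
    unfold cInner
    rw [← Finset.sum_sub_distrib]
    exact Finset.sum_congr rfl fun k _ => by simp [Pi.sub_apply]; ring
  have hI1 : cInner φ (M 1 *ᵥ φ) = 1 - (a : ℂ) := by rw [hsub, hφ, hI0]
  have hT1 : (cInner φ (M 1 *ᵥ φp)).re = -t := by
    rw [hsub, horth, zero_sub, Complex.neg_re, hT0]
  refine ⟨haq, hap, ?_⟩
  unfold gammaSummand
  rw [Fin.sum_univ_two, hI0, hI1, hT0, hT1]
  rw [if_neg (by exact_mod_cast ha0.ne'), if_neg ?_]
  · rw [Complex.ofReal_re, show ((1:ℂ) - (a:ℂ)).re = 1 - a by simp, neg_pow]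
    ring
  · rw [show (1:ℂ) - (a:ℂ) = ((1 - a : ℝ) : ℂ) by push_cast; ring]
    exact_mod_cast (by linarith : (1:ℝ) - a ≠ 0)

lemma keyIneq' (p q a t : ℝ) (hq : 0 < q) (hp : p < 1) (haq : q ≤ a) (hap : a ≤ p)
    (ht : t^2 ≤ (p - a)*(a - q)) :
    t^2/a + t^2/(1-a) ≤ 1 - (Real.sqrt (p*q) + Real.sqrt ((1-p)*(1-q)))^2 := by
  have ha : (0:ℝ) < a := lt_of_lt_of_le hq haq
  have ha1 : a < 1 := lt_of_le_of_lt hap hp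
  have hA : (0:ℝ) ≤ p*q := by nlinarith
  have hB : (0:ℝ) ≤ (1-p)*(1-q) := by nlinarith
  set x := Real.sqrt (p*q) with hx_def
  set y := Real.sqrt ((1-p)*(1-q)) with hy_def
  have hx : x^2 = p*q := Real.sq_sqrt hA
  have hy : y^2 = (1-p)*(1-q) := Real.sq_sqrt hB
  have amgm : (x+y)^2 * (a*(1-a)) ≤ p*q*(1-a) + (1-p)*(1-q)*a := by
    nlinarith [sq_nonneg (x*(1-a) - y*a)]
  have h2 : (p-a)*(a-q) ≤ (1 - (x+y)^2) * (a*(1-a)) := by nlinarith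
  rw [div_add_div _ _ ha.ne' (by linarith : (1:ℝ)-a ≠ 0), div_le_iff₀ (by nlinarith)]
  nlinarith

lemma CSbound' {d : ℕ} (m w w' r : Fin d → ℝ) (p q a : ℝ)
    (hlb : ∀ j, q ≤ m j) (hub : ∀ j, m j ≤ p)
    (hw : ∀ j, 0 ≤ w j) (hw' : ∀ j, 0 ≤ w' j)
    (hsum1 : ∑ j, w j = 1) (hsum1' : ∑ j, w' j = 1)
    (hr0 : ∑ j, r j = 0) (hr2 : ∀ j, r j ^ 2 ≤ w j * w' j)
    (ha : a = ∑ j, m j * w j) :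
    (∑ j, m j * r j)^2 ≤ (p - a) * (a - q) := by
  have ht' : ∑ j, m j * r j = ∑ j, (m j - a) * r j := by
    have e : ∑ j, (m j - a) * r j = ∑ j, (m j * r j - a * r j) :=
      Finset.sum_congr rfl fun j _ => by ring
    rw [e, Finset.sum_sub_distrib, ← Finset.mul_sum, hr0, mul_zero, sub_zero]
  have habs : |∑ j, m j * r j| ≤ ∑ j, (|m j - a| * Real.sqrt (w j)) * Real.sqrt (w' j) := by
    rw [ht']
    refine (Finset.abs_sum_le_sum_abs _ _).trans (Finset.sum_le_sum fun j _ => ?_)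
    rw [abs_mul, mul_assoc]
    refine mul_le_mul_of_nonneg_left ?_ (abs_nonneg _)
    calc |r j| ≤ Real.sqrt (w j * w' j) := Real.abs_le_sqrt (hr2 j)
      _ = _ := Real.sqrt_mul (hw j) _
  have hCS := Finset.sum_mul_sq_le_sq_mul_sq Finset.univ
    (fun j => |m j - a| * Real.sqrt (w j)) (fun j => Real.sqrt (w' j))
  have hsq1 : ∑ j, (|m j - a| * Real.sqrt (w j))^2 = ∑ j, (m j - a)^2 * w j := by
    refine Finset.sum_congr rfl fun j _ => ?_
    rw [mul_pow, sq_abs, Real.sq_sqrt (hw j)]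
  have hsq2 : ∑ j, (Real.sqrt (w' j))^2 = 1 := by
    rw [Finset.sum_congr rfl fun j _ => Real.sq_sqrt (hw' j), hsum1']
  have hvar : ∑ j, (m j - a)^2 * w j ≤ (p - a)*(a - q) := by
    have step : ∀ j ∈ Finset.univ, (m j - a)^2 * w j
        ≤ ((p+q-2*a)*(m j) + (a^2 - p*q)) * w j := fun j _ => by
      have h1 := hlb j; have h2 := hub j; have h3 := hw j
      nlinarith [mul_nonneg (mul_nonneg (sub_nonneg.2 h2) (sub_nonneg.2 h1)) h3]
    calc ∑ j, (m j - a)^2 * w j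
        ≤ ∑ j, ((p+q-2*a)*(m j) + (a^2 - p*q)) * w j := Finset.sum_le_sum step
      _ = (p+q-2*a) * (∑ j, m j * w j) + (a^2 - p*q) * (∑ j, w j) := by
          rw [Finset.mul_sum, Finset.mul_sum, ← Finset.sum_add_distrib]
          exact Finset.sum_congr rfl fun j _ => by ring
      _ = (p+q-2*a) * a + (a^2 - p*q) * 1 := by rw [← ha, hsum1]
      _ ≤ (p - a)*(a - q) := le_of_eq (by ring)
  calc (∑ j, m j * r j)^2 = |∑ j, m j * r j|^2 := (sq_abs _).symm
    _ ≤ (∑ j, (|m j - a| * Real.sqrt (w j)) * Real.sqrt (w' j))^2 := by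
        refine pow_le_pow_left₀ (abs_nonneg _) habs 2
    _ ≤ (∑ j, (|m j - a| * Real.sqrt (w j))^2) * ∑ j, (Real.sqrt (w' j))^2 := hCS
    _ ≤ (p - a)*(a - q) := by rw [hsq1, hsq2, mul_one]; exact hvar

lemma sum_two' {d : ℕ} {α : Type*} [AddCommMonoid α] {i0 i1 : Fin d} (hne : i0 ≠ i1)
    (F : Fin d → α) (hF : ∀ j, j ≠ i0 → j ≠ i1 → F j = 0) : ∑ j, F j = F i0 + F i1 := by
  have h := Finset.sum_subset (Finset.subset_univ ({i0, i1} : Finset (Fin d)))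
    (fun j _ hj => by
      simp only [Finset.mem_insert, Finset.mem_singleton] at hj
      push_neg at hj
      exact hF j hj.1 hj.2)
  rw [← h, Finset.sum_pair hne]

lemma aStar_bounds' (p q : ℝ) (hq : 0 < q) (hp : p < 1) (hqp : q < p) :
    q ≤ Real.sqrt (p*q) / (Real.sqrt (p*q) + Real.sqrt ((1-p)*(1-q))) ∧
    Real.sqrt (p*q) / (Real.sqrt (p*q) + Real.sqrt ((1-p)*(1-q))) ≤ p := by
  have hp0 : 0 < p := lt_trans hq hqp
  have hq1 : q < 1 := lt_trans hqp hp
  have hA : (0:ℝ) < p*q := by positivity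
  have hB : (0:ℝ) < (1-p)*(1-q) := by nlinarith
  set x := Real.sqrt (p*q) with hx_def
  set y := Real.sqrt ((1-p)*(1-q)) with hy_def
  have hx : x^2 = p*q := Real.sq_sqrt hA.le
  have hy : y^2 = (1-p)*(1-q) := Real.sq_sqrt hB.le
  have hx0 : 0 < x := Real.sqrt_pos.2 hA
  have hy0 : 0 < y := Real.sqrt_pos.2 hB
  have hs : 0 < x + y := by linarith
  constructor
  · rw [le_div_iff₀ hs]
    have h1 : q*y ≤ x*(1-q) := by
      have e1 : q*y = Real.sqrt (q^2*((1-p)*(1-q))) := by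
        rw [Real.sqrt_mul (sq_nonneg q), Real.sqrt_sq hq.le]
      have e2 : x*(1-q) = Real.sqrt ((p*q)*(1-q)^2) := by
        rw [Real.sqrt_mul hA.le, Real.sqrt_sq (by linarith)]
      rw [e1, e2]
      refine Real.sqrt_le_sqrt ?_
      have : p*q*(1-q)^2 - q^2*((1-p)*(1-q)) = q*(1-q)*(p-q) := by ring
      nlinarith [mul_pos (mul_pos hq (by linarith : (0:ℝ)<1-q)) (by linarith : (0:ℝ)<p-q)]
    nlinarith
  · rw [div_le_iff₀ hs]
    have h2 : x*(1-p) ≤ p*y := by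
      have e1 : p*y = Real.sqrt (p^2*((1-p)*(1-q))) := by
        rw [Real.sqrt_mul (sq_nonneg p), Real.sqrt_sq hp0.le]
      have e2 : x*(1-p) = Real.sqrt ((p*q)*(1-p)^2) := by
        rw [Real.sqrt_mul hA.le, Real.sqrt_sq (by linarith)]
      rw [e1, e2]
      refine Real.sqrt_le_sqrt ?_
      have : p^2*((1-p)*(1-q)) - p*q*(1-p)^2 = p*(1-p)*(p-q) := by ring
      nlinarith [mul_pos (mul_pos hp0 (by linarith : (0:ℝ)<1-p)) (by linarith : (0:ℝ)<p-q)]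
    nlinarith

lemma keyEq' (p q x y : ℝ) (hq : 0 < q) (hp : p < 1) (hqp : q < p)
    (hxd : x = Real.sqrt (p*q)) (hyd : y = Real.sqrt ((1-p)*(1-q))) :
    (p - x/(x+y))*(x/(x+y) - q) = (1 - (x+y)^2) * ((x/(x+y))*(1-(x/(x+y)))) := by
  have hp0 : 0 < p := lt_trans hq hqp
  have hq1 : q < 1 := lt_trans hqp hp
  have hA : (0:ℝ) < p*q := by positivity
  have hB : (0:ℝ) < (1-p)*(1-q) := by nlinarith
  have hx : x^2 = p*q := by rw [hxd]; exact Real.sq_sqrt hA.le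
  have hy : y^2 = (1-p)*(1-q) := by rw [hyd]; exact Real.sq_sqrt hB.le
  have hx0 : 0 < x := hxd ▸ Real.sqrt_pos.2 hA
  have hy0 : 0 < y := hyd ▸ Real.sqrt_pos.2 hB
  have hs : (0:ℝ) < x + y := by linarith
  field_simp
  ring_nf
  nlinarith [hx, hy, sq_nonneg (x+y)]

/-- the normalized QPFI of a binary measurement `M₁ = diag(m₁,…,m_d)`,
`M₂ = 1 − M₁` on a qudit with decreasingly ordered diagonal entries in `(0,1)` is
determined by the largest and smallest entries. -/
theorem stmt8 {d : ℕ} (hd : 2 ≤ d) (m : Fin d → ℝ)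
    (hm : ∀ j, m j ∈ Set.Ioo (0 : ℝ) 1)
    (hmono : ∀ i j : Fin d, i ≤ j → m j ≤ m i)
    (hstrict : m ⟨d - 1, by omega⟩ < m ⟨0, by omega⟩)
    (M : Fin 2 → Matrix (Fin d) (Fin d) ℂ)
    (hM0 : M 0 = Matrix.diagonal fun j => ((m j : ℝ) : ℂ))
    (hM1 : M 1 = 1 - M 0) :
    gammaPOVM M = 1 -
      (Real.sqrt (m ⟨0, by omega⟩ * m ⟨d - 1, by omega⟩) +
        Real.sqrt ((1 - m ⟨0, by omega⟩) * (1 - m ⟨d - 1, by omega⟩))) ^ 2 := by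
  have h0d : 0 < d := by omega
  have h1d : d - 1 < d := by omega
  set i0 : Fin d := ⟨0, h0d⟩ with hi0
  set i1 : Fin d := ⟨d - 1, h1d⟩ with hi1
  set p : ℝ := m i0 with hp_def
  set q : ℝ := m i1 with hq_def
  have hq : 0 < q := (hm i1).1
  have hp : p < 1 := (hm i0).2
  have hqp : q < p := hstrict
  have hp0 : 0 < p := lt_trans hq hqp
  have hq1 : q < 1 := lt_trans hqp hp
  have hlb : ∀ j, q ≤ m j := fun j => hmono j i1 (by
    rw [Fin.le_def]; exact Nat.le_sub_one_of_lt j.isLt)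
  have hub : ∀ j, m j ≤ p := fun j => hmono i0 j (by
    rw [Fin.le_def]; exact Nat.zero_le _)
  show gammaPOVM M = 1 - (Real.sqrt (p*q) + Real.sqrt ((1-p)*(1-q)))^2
  set C : ℝ := 1 - (Real.sqrt (p*q) + Real.sqrt ((1-p)*(1-q)))^2 with hC_def
  -- upper bound
  have hub_all : ∀ v ∈ {x : ℝ | ∃ φ φp : Fin d → ℂ,
      cInner φ φ = 1 ∧ cInner φp φp = 1 ∧ cInner φ φp = 0 ∧ x = gammaSummand M φ φp},
      v ≤ C := by
    rintro v ⟨φ, φp, hφ, hφp, horth, rfl⟩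
    obtain ⟨haq, hap, heval⟩ := gamma_eval' m q p hq hp hlb hub M hM0 hM1 φ φp hφ horth
    rw [heval]
    have hsum1 : ∑ j, Complex.normSq (φ j) = 1 := by
      have := (cInner_self' φ).symm.trans hφ
      exact_mod_cast this
    have hsum1' : ∑ j, Complex.normSq (φp j) = 1 := by
      have := (cInner_self' φp).symm.trans hφp
      exact_mod_cast this
    have hr0 : ∑ j, (star (φ j) * φp j).re = 0 := by
      have h := congrArg Complex.re horth
      rw [show (cInner φ φp).re = ∑ j, (star (φ j) * φp j).re by
        unfold cInner; rw [Complex.re_sum]] at h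
      simpa using h
    have hr2 : ∀ j, ((star (φ j) * φp j).re) ^ 2
        ≤ Complex.normSq (φ j) * Complex.normSq (φp j) := by
      intro j
      have h2 := Complex.normSq_apply (star (φ j) * φp j)
      have h3 : Complex.normSq (star (φ j) * φp j)
          = Complex.normSq (φ j) * Complex.normSq (φp j) := by
        rw [Complex.normSq_mul, Complex.star_def, Complex.normSq_conj]
      nlinarith [sq_nonneg (star (φ j) * φp j).im]
    exact keyIneq' p q _ _ hq hp haq hap
      (CSbound' m (fun j => Complex.normSq (φ j)) (fun j => Complex.normSq (φp j))
        (fun j => (star (φ j) * φp j).re) p q _ hlb hub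
        (fun j => Complex.normSq_nonneg _) (fun j => Complex.normSq_nonneg _)
        hsum1 hsum1' hr0 hr2 rfl)
  -- achievability
  have hA : (0:ℝ) < p*q := by positivity
  have hB : (0:ℝ) < (1-p)*(1-q) := by nlinarith
  set x := Real.sqrt (p*q) with hx_def
  set y := Real.sqrt ((1-p)*(1-q)) with hy_def
  have hx0 : 0 < x := Real.sqrt_pos.2 hA
  have hy0 : 0 < y := Real.sqrt_pos.2 hB
  have hs : (0:ℝ) < x + y := by linarith
  set a : ℝ := x / (x + y) with ha_def
  obtain ⟨haq, hap⟩ := aStar_bounds' p q hq hp hqp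
  have ha0 : 0 < a := lt_of_lt_of_le hq haq
  have ha1 : a < 1 := lt_of_le_of_lt hap hp
  have hpq : (0:ℝ) < p - q := by linarith
  set c : ℝ := Real.sqrt ((a-q)/(p-q)) with hc_def
  set s : ℝ := Real.sqrt ((p-a)/(p-q)) with hs_def
  have hc2 : c^2 = (a-q)/(p-q) := Real.sq_sqrt (div_nonneg (by linarith) hpq.le)
  have hs2 : s^2 = (p-a)/(p-q) := Real.sq_sqrt (div_nonneg (by linarith) hpq.le)
  have hcs1 : c^2 + s^2 = 1 := by
    rw [hc2, hs2, ← add_div, div_eq_one_iff_eq hpq.ne']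
    ring
  have hne : i0 ≠ i1 := by
    simp only [hi0, hi1, ne_eq, Fin.mk.injEq]
    omega
  set φ : Fin d → ℂ := fun j => if j = i0 then (c:ℂ) else if j = i1 then (s:ℂ) else 0
    with hφ_def
  set φp : Fin d → ℂ := fun j => if j = i0 then (-(s:ℂ)) else if j = i1 then (c:ℂ) else 0
    with hφp_def
  have vφ0 : φ i0 = (c:ℂ) := by rw [hφ_def]; simp
  have vφ1 : φ i1 = (s:ℂ) := by rw [hφ_def]; simp [hne.symm]
  have vp0 : φp i0 = (-(s:ℂ)) := by rw [hφp_def]; simp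
  have vp1 : φp i1 = (c:ℂ) := by rw [hφp_def]; simp [hne.symm]
  have hφz : ∀ j, j ≠ i0 → j ≠ i1 → φ j = 0 := fun j h0 h1 => by
    rw [hφ_def]; simp [h0, h1]
  have hφpz : ∀ j, j ≠ i0 → j ≠ i1 → φp j = 0 := fun j h0 h1 => by
    rw [hφp_def]; simp [h0, h1]
  have hφφ : cInner φ φ = 1 := by
    unfold cInner
    rw [sum_two' hne _ (fun j h0 h1 => by rw [hφz j h0 h1]; simp)]
    rw [vφ0, vφ1]
    simp only [Complex.star_def, Complex.conj_ofReal]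
    rw [show ((c:ℂ))*(c:ℂ) + (s:ℂ)*(s:ℂ) = ((c^2+s^2 : ℝ):ℂ) by push_cast; ring, hcs1]
    norm_num
  have hφpφp : cInner φp φp = 1 := by
    unfold cInner
    rw [sum_two' hne _ (fun j h0 h1 => by rw [hφpz j h0 h1]; simp)]
    rw [vp0, vp1]
    simp only [star_neg, Complex.star_def, Complex.conj_ofReal]
    rw [show (-(s:ℂ))*(-(s:ℂ)) + (c:ℂ)*(c:ℂ) = ((c^2+s^2 : ℝ):ℂ) by push_cast; ring, hcs1]
    norm_num
  have horth : cInner φ φp = 0 := by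
    unfold cInner
    rw [sum_two' hne _ (fun j h0 h1 => by rw [hφpz j h0 h1]; simp)]
    rw [vφ0, vφ1, vp0, vp1]
    simp only [Complex.star_def, Complex.conj_ofReal]
    ring
  obtain ⟨_, _, heval⟩ := gamma_eval' m q p hq hp hlb hub M hM0 hM1 φ φp hφφ horth
  have hA' : ∑ j, m j * Complex.normSq (φ j) = a := by
    rw [sum_two' hne _ (fun j h0 h1 => by rw [hφz j h0 h1]; simp)]
    rw [vφ0, vφ1, Complex.normSq_ofReal, Complex.normSq_ofReal]
    rw [show m i0 * (c*c) + m i1 * (s*s) = p * c^2 + q * s^2 by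
      rw [← hp_def, ← hq_def]; ring]
    rw [hc2, hs2]
    field_simp
    ring
  have hT' : ∑ j, m j * (star (φ j) * φp j).re = (q - p)*(c*s) := by
    rw [sum_two' hne _ (fun j h0 h1 => by rw [hφz j h0 h1]; simp)]
    rw [vφ0, vφ1, vp0, vp1]
    simp only [Complex.star_def, Complex.conj_ofReal]
    rw [show ((c:ℂ)) * (-(s:ℂ)) = ((-(c*s) : ℝ) : ℂ) by push_cast; ring]
    rw [show ((s:ℂ)) * ((c:ℂ)) = ((s*c : ℝ) : ℂ) by push_cast; ring]
    rw [Complex.ofReal_re, Complex.ofReal_re, ← hp_def, ← hq_def]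
    ring
  have hval : gammaSummand M φ φp = C := by
    rw [heval, hA', hT']
    have ht2 : ((q-p)*(c*s))^2 = (p-a)*(a-q) := by
      rw [show ((q-p)*(c*s))^2 = (p-q)^2 * (c^2 * s^2) by ring, hc2, hs2]
      field_simp
    rw [ht2]
    have hkey := keyEq' p q x y hq hp hqp hx_def hy_def
    rw [← ha_def] at hkey
    rw [div_add_div _ _ ha0.ne' (by linarith : (1:ℝ)-a ≠ 0),
      div_eq_iff (mul_pos ha0 (by linarith : (0:ℝ) < 1-a)).ne', hC_def]
    linear_combination hkey
  have hmem : C ∈ {x : ℝ | ∃ φ φp : Fin d → ℂ,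
      cInner φ φ = 1 ∧ cInner φp φp = 1 ∧ cInner φ φp = 0 ∧ x = gammaSummand M φ φp} :=
    ⟨φ, φp, hφφ, hφpφp, horth, hval.symm⟩
  unfold gammaPOVM
  exact le_antisymm (csSup_le ⟨C, hmem⟩ hub_all) (le_csSup ⟨C, fun v hv => hub_all v hv⟩ hmem)
end
end
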